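/- arXiv:math/9507221 — 6 statements merged into one kernel-verified Lean document; each statement's English description precedes it below -/
import Mathlib

section
/- Let X be a set with a distance function d : X × X → ℕ ∪ {∞} which is symmetric, satisfies d(x,x) = 0, and the triangle inequality. Let f : ℕ × ℕ → ℕ (written f_n(r)) be nondecreasing in each argument and satisfy 2·f_{n₁}(r₁) + f_{n₂}(r₂) ≤ f_{n₁+n₂+1}(r₁+r₂). Given points a₀,…,a_{m-1} ∈ X and radii r₀,…,r_{m-1} ∈ ℕ, there exist a subset w ⊆ {0,…,m-1}, natural numbers n_i for i ∈ w with Σ_{i∈w} n_i ≤ m − |w|, and a retraction g : {0,…,m-1} → w (g is the identity on w) such that the balls N_i = {x ∈ X : d(x, a_i) ≤ f_{n_i}(Σ{r_j : g(j) = i})} for i ∈ w are pairwise disjoint and every a_j (j < m) lies in the ball N_{g'} for some i ∈ w, i.e. ⋃_{i∈w} N_i ⊇ {a₀,…,a_{m-1}}. -/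
/-!
Start with every index as its own cluster (centre `a i`, level `0`, mass `r i`). While two balls
meet at a point `x`, merge the cluster of `i'` into that of `i`: a point of the cluster of `i'`
reaches `a i` through `a i'` and `x` within `2 f_{n'}(R') + f_n(R) ≤ f_{n'+n+1}(R' + R)`, so the
merged cluster of level `n' + n + 1` and mass `R' + R` still covers both. A merge removes one
centre and raises the total level by one, so `Σ n_i + |w| ≤ m` is preserved, and after finitely
many merges the balls are pairwise disjoint.
-/

section

open Finset

variable {X ι : Type*} [Fintype ι] [DecidableEq ι]

def clusterMass (r : ι → ℕ) (g : ι → ι) (i : ι) : ℕ :=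
  ∑ j ∈ univ.filter (fun j => g j = i), r j

def redirect (g : ι → ι) (i' i : ι) (j : ι) : ι :=
  if g j = i' then i else g j

lemma clusterMass_redirect_self (r : ι → ℕ) (g : ι → ι) {i' i : ι} (hne : i' ≠ i) :
    clusterMass r (redirect g i' i) i = clusterMass r g i' + clusterMass r g i := by
  simp only [clusterMass, sum_filter, ← sum_add_distrib]
  refine sum_congr rfl fun j _ => ?_
  by_cases hj : g j = i' <;> simp [redirect, hj, hne]

lemma clusterMass_redirect_of_ne (r : ι → ℕ) (g : ι → ι) {i' i k : ι} (hk' : k ≠ i')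
    (hk : k ≠ i) : clusterMass r (redirect g i' i) k = clusterMass r g k := by
  simp only [clusterMass, sum_filter]
  refine sum_congr rfl fun j _ => ?_
  by_cases hj : g j = i' <;> simp [redirect, hj, hk'.symm, hk.symm]

structure Clustering (d : X → X → ℕ∞) (f : ℕ → ℕ → ℕ) (a : ι → X) (r : ι → ℕ) where
  centers : Finset ι
  level : ι → ℕ
  toCenter : ι → ι
  toCenter_mem : ∀ j, toCenter j ∈ centers
  toCenter_eq_self : ∀ i ∈ centers, toCenter i = i
  sum_level_add_card_le : ∑ i ∈ centers, level i + centers.card ≤ Fintype.card ι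
  dist_le : ∀ j,
    d (a j) (a (toCenter j)) ≤ f (level (toCenter j)) (clusterMass r toCenter (toCenter j))

namespace Clustering

variable {d : X → X → ℕ∞} {f : ℕ → ℕ → ℕ} {a : ι → X} {r : ι → ℕ}

def radius (C : Clustering d f a r) (i : ι) : ℕ :=
  f (C.level i) (clusterMass r C.toCenter i)

def ball (C : Clustering d f a r) (i : ι) : Set X :=
  {x | d x (a i) ≤ C.radius i}

def singletons (hself : ∀ x, d x x = 0) : Clustering d f a r where
  centers := univ
  level := 0
  toCenter := id
  toCenter_mem := mem_univ
  toCenter_eq_self _ _ := rfl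
  sum_level_add_card_le := by simp
  dist_le j := by simp [hself]

lemma dist_le_of_mem_ball_inter (C : Clustering d f a r) (hsymm : ∀ x y, d x y = d y x)
    (htri : ∀ x y z, d x z ≤ d x y + d y z) {i i' j : ι} {x : X} (hx : x ∈ C.ball i)
    (hx' : x ∈ C.ball i') (hj : C.toCenter j = i') :
    d (a j) (a i) ≤ (2 * C.radius i' + C.radius i : ℕ) := by
  have hdist := C.dist_le j
  rw [hj] at hdist
  calc d (a j) (a i) ≤ d (a j) (a i') + d (a i') (a i) := htri _ _ _
    _ ≤ d (a j) (a i') + (d (a i') x + d x (a i)) := add_le_add_right (htri _ _ _) _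
    _ ≤ C.radius i' + (C.radius i' + C.radius i) :=
        add_le_add hdist (add_le_add (hsymm (a i') x ▸ hx') hx)
    _ = (2 * C.radius i' + C.radius i : ℕ) := by push_cast; ring

def merge (C : Clustering d f a r) (hsymm : ∀ x y, d x y = d y x)
    (htri : ∀ x y z, d x z ≤ d x y + d y z)
    (hf : ∀ n₁ n₂ r₁ r₂ : ℕ, 2 * f n₁ r₁ + f n₂ r₂ ≤ f (n₁ + n₂ + 1) (r₁ + r₂))
    {i i' : ι} (hi : i ∈ C.centers) (hi' : i' ∈ C.centers) (hne : i' ≠ i)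
    (hmeet : ¬ Disjoint (C.ball i) (C.ball i')) : Clustering d f a r where
  centers := C.centers.erase i'
  level := Function.update C.level i (C.level i' + C.level i + 1)
  toCenter := redirect C.toCenter i' i
  toCenter_mem j := by
    unfold redirect
    split_ifs with hj
    · exact mem_erase.mpr ⟨hne.symm, hi⟩
    · exact mem_erase.mpr ⟨hj, C.toCenter_mem j⟩
  toCenter_eq_self k hk := by
    obtain ⟨hk', hk⟩ := mem_erase.mp hk
    simp [redirect, C.toCenter_eq_self k hk, hk']
  sum_level_add_card_le := by
    have hi_erase : i ∈ C.centers.erase i' := mem_erase.mpr ⟨hne.symm, hi⟩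
    have hsum : ∑ k ∈ C.centers, C.level k =
        C.level i' + (C.level i + ∑ k ∈ (C.centers.erase i').erase i, C.level k) := by
      rw [← add_sum_erase _ _ hi', ← add_sum_erase _ _ hi_erase]
    have hcard := card_erase_add_one hi'
    rw [sum_update_of_mem hi_erase, sdiff_singleton_eq_erase]
    have hinv := C.sum_level_add_card_le
    omega
  dist_le j := by
    obtain ⟨x, hx, hx'⟩ := Set.not_disjoint_iff.mp hmeet
    have hgrow : 2 * C.radius i' + C.radius i ≤
        f (Function.update C.level i (C.level i' + C.level i + 1) i)
          (clusterMass r (redirect C.toCenter i' i) i) := by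
      rw [Function.update_self, clusterMass_redirect_self r _ hne]
      exact hf _ _ _ _
    by_cases hj' : C.toCenter j = i'
    · simp only [redirect, hj', if_true]
      exact (C.dist_le_of_mem_ball_inter hsymm htri hx hx' hj').trans (Nat.cast_le.mpr hgrow)
    · by_cases hj : C.toCenter j = i
      · have hdist := C.dist_le j
        rw [hj] at hdist
        simp only [redirect, hj, ite_self]
        exact hdist.trans (Nat.cast_le.mpr ((Nat.le_add_left _ _).trans hgrow))
      · simp only [redirect, hj', if_false]
        rw [Function.update_of_ne hj, clusterMass_redirect_of_ne r _ hj' hj]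
        exact C.dist_le j

theorem exists_pairwiseDisjoint_ball (hsymm : ∀ x y, d x y = d y x)
    (htri : ∀ x y z, d x z ≤ d x y + d y z)
    (hf : ∀ n₁ n₂ r₁ r₂ : ℕ, 2 * f n₁ r₁ + f n₂ r₂ ≤ f (n₁ + n₂ + 1) (r₁ + r₂))
    (C : Clustering d f a r) :
    ∃ C' : Clustering d f a r, (C'.centers : Set ι).PairwiseDisjoint C'.ball := by
  induction hn : C.centers.card using Nat.strong_induction_on generalizing C with
  | _ n ih =>
    by_cases hdisj : (C.centers : Set ι).PairwiseDisjoint C.ball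
    · exact ⟨C, hdisj⟩
    · obtain ⟨i, hi, i', hi', hne, hmeet⟩ : ∃ i ∈ C.centers, ∃ i' ∈ C.centers, i ≠ i' ∧
          ¬ Disjoint (C.ball i) (C.ball i') := by
        simpa [Set.PairwiseDisjoint, Set.Pairwise] using hdisj
      exact ih _ (hn ▸ card_erase_lt_of_mem hi')
        (C.merge hsymm htri hf hi hi' (Ne.symm hne) hmeet) rfl

end Clustering

end

theorem stmt_3_general {X : Type*} (d : X → X → ℕ∞)
    (hsymm : ∀ x y, d x y = d y x) (hself : ∀ x, d x x = 0)
    (htri : ∀ x y z, d x z ≤ d x y + d y z)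
    (f : ℕ → ℕ → ℕ)
    (hf : ∀ n₁ n₂ r₁ r₂ : ℕ, 2 * f n₁ r₁ + f n₂ r₂ ≤ f (n₁ + n₂ + 1) (r₁ + r₂))
    (m : ℕ) (a : Fin m → X) (r : Fin m → ℕ) :
    ∃ (w : Finset (Fin m)) (nn : Fin m → ℕ) (g : Fin m → Fin m),
      (∀ j, g j ∈ w) ∧ (∀ i ∈ w, g i = i) ∧
      (∑ i ∈ w, nn i) ≤ m - w.card ∧
      (∀ i ∈ w, ∀ i' ∈ w, i ≠ i' →
        Disjoint
          {x : X | d x (a i) ≤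
            (f (nn i) (∑ j ∈ Finset.univ.filter (fun j => g j = i), r j) : ℕ∞)}
          {x : X | d x (a i') ≤
            (f (nn i') (∑ j ∈ Finset.univ.filter (fun j => g j = i'), r j) : ℕ∞)}) ∧
      (∀ j : Fin m, ∃ i ∈ w,
        d (a j) (a i) ≤
          (f (nn i) (∑ j' ∈ Finset.univ.filter (fun j' => g j' = i), r j') : ℕ∞)) := by
  obtain ⟨C, hdisj⟩ := Clustering.exists_pairwiseDisjoint_ball hsymm htri hf
    (Clustering.singletons (a := a) (r := r) hself)
  have hsum := C.sum_level_add_card_le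
  rw [Fintype.card_fin] at hsum
  exact ⟨C.centers, C.level, C.toCenter, C.toCenter_mem, C.toCenter_eq_self,
    Nat.le_sub_of_add_le hsum, fun i hi i' hi' hne => hdisj hi hi' hne,
    fun j => ⟨C.toCenter j, C.toCenter_mem j, C.dist_le j⟩⟩

theorem stmt_3 {X : Type*} (d : X → X → ℕ∞)
    (hsymm : ∀ x y, d x y = d y x) (hself : ∀ x, d x x = 0)
    (htri : ∀ x y z, d x z ≤ d x y + d y z)
    (f : ℕ → ℕ → ℕ)
    (hmono_n : ∀ r : ℕ, Monotone (fun n => f n r))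
    (hmono_r : ∀ n : ℕ, Monotone (f n))
    (hf : ∀ n₁ n₂ r₁ r₂ : ℕ, 2 * f n₁ r₁ + f n₂ r₂ ≤ f (n₁ + n₂ + 1) (r₁ + r₂))
    (m : ℕ) (a : Fin m → X) (r : Fin m → ℕ) :
    ∃ (w : Finset (Fin m)) (nn : Fin m → ℕ) (g : Fin m → Fin m),
      (∀ j, g j ∈ w) ∧ (∀ i ∈ w, g i = i) ∧
      (∑ i ∈ w, nn i) ≤ m - w.card ∧
      (∀ i ∈ w, ∀ i' ∈ w, i ≠ i' →
        Disjoint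
          {x : X | d x (a i) ≤
            (f (nn i) (∑ j ∈ Finset.univ.filter (fun j => g j = i), r j) : ℕ∞)}
          {x : X | d x (a i') ≤
            (f (nn i') (∑ j ∈ Finset.univ.filter (fun j => g j = i'), r j) : ℕ∞)}) ∧
      (∀ j : Fin m, ∃ i ∈ w,
        d (a j) (a i) ≤
          (f (nn i) (∑ j' ∈ Finset.univ.filter (fun j' => g j' = i), r j') : ℕ∞)) :=
  stmt_3_general d hsymm hself htri f hf m a r
end

section
/- Under the same hypotheses as the ball-disjointification lemma but with the modification that radii are combined by maximum instead of sum (i.e. balls have radius f_{n_i}(max{r_j : g(j) = i})) and the function f satisfies 2·f_{n₁}(r₁) + f_{n₂}(r₂) ≤ f_{n₁+n₂+1}(max(r₁,r₂)), the same conclusion holds: pairwise disjoint balls covering all the points a₀,…,a_{m-1} with Σ_{i∈w} n_i ≤ m − |w|. -/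
/-!
Start with every point in its own ball of radius `f 0 (r j)`. While two balls, of radii
`f (n i) R` around `a i` and `f (n i') R'` around `a i'`, meet, merge the cluster of `i'` into
that of `i` with index `n i' + n i + 1`. Each point of the old cluster `i'` is within
`2 f (n i') R' + f (n i) R` of `a i` (via `a i'` and a common point of the two balls), which the
hypothesis on `f` bounds by the new radius `f (n i' + n i + 1) (max R' R)`; so does the old
radius of cluster `i`. Each merge removes one centre and adds one to the total index, so
`∑ n + #w ≤ m` is preserved.
-/

open Finset

section BallMerging

variable {X ι : Type*} [Fintype ι] [DecidableEq ι]

def clusterRadius (r : ι → ℕ) (g : ι → ι) (i : ι) : ℕ :=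
  (univ.filter fun j => g j = i).sup r

def mergeCluster (g : ι → ι) (i' i : ι) : ι → ι :=
  fun j => if g j = i' then i else g j

lemma clusterRadius_mergeCluster_self (r : ι → ℕ) (g : ι → ι) {i' i : ι} (hne : i' ≠ i) :
    clusterRadius r (mergeCluster g i' i) i =
      max (clusterRadius r g i') (clusterRadius r g i) := by
  have hfibre : (univ.filter fun j => mergeCluster g i' i j = i) =
      (univ.filter fun j => g j = i') ∪ (univ.filter fun j => g j = i) := by
    ext j
    by_cases hj : g j = i' <;> simp [mergeCluster, hj, hne]
  rw [clusterRadius, hfibre, sup_union]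
  rfl

lemma clusterRadius_mergeCluster_of_ne (r : ι → ℕ) (g : ι → ι) {i' i l : ι}
    (hi' : l ≠ i') (hi : l ≠ i) :
    clusterRadius r (mergeCluster g i' i) l = clusterRadius r g l := by
  have hfibre : (univ.filter fun j => mergeCluster g i' i j = l) =
      univ.filter fun j => g j = l :=
    filter_congr fun j _ => by
      by_cases hj : g j = i' <;> simp [mergeCluster, hj, hi.symm, hi'.symm]
  rw [clusterRadius, hfibre]
  rfl

structure IsBallCover (d : X → X → ℕ∞) (f : ℕ → ℕ → ℕ) (a : ι → X) (r : ι → ℕ)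
    (w : Finset ι) (n : ι → ℕ) (g : ι → ι) : Prop where
  mem : ∀ j, g j ∈ w
  map_self : ∀ i ∈ w, g i = i
  budget : ∑ i ∈ w, n i + #w ≤ Fintype.card ι
  cover : ∀ j, d (a j) (a (g j)) ≤ f (n (g j)) (clusterRadius r g (g j))

namespace IsBallCover

variable {d : X → X → ℕ∞} {f : ℕ → ℕ → ℕ} {a : ι → X} {r : ι → ℕ}
  {w : Finset ι} {n : ι → ℕ} {g : ι → ι}

lemma singletons (hself : ∀ x, d x x = 0) : IsBallCover d f a r univ 0 id where
  mem := mem_univ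
  map_self _ _ := rfl
  budget := by simp
  cover j := by simp [hself]

lemma merge (hsymm : ∀ x y, d x y = d y x) (htri : ∀ x y z, d x z ≤ d x y + d y z)
    (hf : ∀ n₁ n₂ r₁ r₂ : ℕ, 2 * f n₁ r₁ + f n₂ r₂ ≤ f (n₁ + n₂ + 1) (max r₁ r₂))
    (hc : IsBallCover d f a r w n g) {i' i : ι} (hi' : i' ∈ w) (hi : i ∈ w) (hne : i' ≠ i)
    {x : X} (hx' : d x (a i') ≤ f (n i') (clusterRadius r g i'))
    (hx : d x (a i) ≤ f (n i) (clusterRadius r g i)) :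
    IsBallCover d f a r (w.erase i') (n + Pi.single i (n i' + 1)) (mergeCluster g i' i) where
  mem j := by
    unfold mergeCluster
    split_ifs with hj
    · exact mem_erase.2 ⟨hne.symm, hi⟩
    · exact mem_erase.2 ⟨hj, hc.mem j⟩
  map_self l hl := by
    obtain ⟨hl', hlw⟩ := mem_erase.1 hl
    simp [mergeCluster, hc.map_self l hlw, hl']
  budget := by
    have hsplit : ∑ j ∈ w, n j = n i' + ∑ j ∈ w.erase i', n j := (add_sum_erase _ _ hi').symm
    have hcard := card_erase_add_one hi'
    have := hc.budget
    simp only [Pi.add_apply]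
    rw [sum_add_distrib, sum_pi_single', if_pos (mem_erase.2 ⟨hne.symm, hi⟩)]
    omega
  cover j := by
    set ρ' := f (n i') (clusterRadius r g i')
    set ρ := f (n i) (clusterRadius r g i)
    have hmerged : ((2 * ρ' + ρ : ℕ) : ℕ∞) ≤
        f ((n + Pi.single i (n i' + 1) : ι → ℕ) i) (clusterRadius r (mergeCluster g i' i) i) := by
      rw [clusterRadius_mergeCluster_self r g hne, Pi.add_apply, Pi.single_eq_same,
        show n i + (n i' + 1) = n i' + n i + 1 by omega]
      exact_mod_cast hf _ _ _ _
    by_cases hj' : g j = i'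
    · have hgj : mergeCluster g i' i j = i := by simp [mergeCluster, hj']
      have hj := hc.cover j
      rw [hj'] at hj
      rw [hgj]
      refine le_trans ?_ hmerged
      calc d (a j) (a i) ≤ d (a j) (a i') + (d (a i') x + d x (a i)) :=
            (htri _ _ _).trans (add_le_add_right (htri _ _ _) _)
        _ ≤ ρ' + (ρ' + ρ) := by gcongr; rwa [hsymm]
        _ = ((2 * ρ' + ρ : ℕ) : ℕ∞) := by push_cast; ring
    by_cases hj : g j = i
    · have hgj : mergeCluster g i' i j = i := by simp [mergeCluster, hj]
      have hcov := hc.cover j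
      rw [hj] at hcov
      rw [hgj]
      refine hcov.trans (le_trans ?_ hmerged)
      exact_mod_cast Nat.le_add_left ρ (2 * ρ')
    · have hgj : mergeCluster g i' i j = g j := by simp [mergeCluster, hj']
      rw [hgj, clusterRadius_mergeCluster_of_ne r g hj' hj, Pi.add_apply,
        Pi.single_eq_of_ne hj, add_zero]
      exact hc.cover j

lemma exists_pairwise_disjoint (hsymm : ∀ x y, d x y = d y x)
    (htri : ∀ x y z, d x z ≤ d x y + d y z)
    (hf : ∀ n₁ n₂ r₁ r₂ : ℕ, 2 * f n₁ r₁ + f n₂ r₂ ≤ f (n₁ + n₂ + 1) (max r₁ r₂))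
    (hc : IsBallCover d f a r w n g) :
    ∃ (w' : Finset ι) (n' : ι → ℕ) (g' : ι → ι), IsBallCover d f a r w' n' g' ∧
      ∀ i ∈ w', ∀ i' ∈ w', i ≠ i' →
        Disjoint {x : X | d x (a i) ≤ f (n' i) (clusterRadius r g' i)}
          {x : X | d x (a i') ≤ f (n' i') (clusterRadius r g' i')} := by
  induction w using Finset.strongInduction generalizing n g with
  | H w ih =>
    by_cases hdisj : ∀ i ∈ w, ∀ i' ∈ w, i ≠ i' →
        Disjoint {x : X | d x (a i) ≤ f (n i) (clusterRadius r g i)}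
          {x : X | d x (a i') ≤ f (n i') (clusterRadius r g i')}
    · exact ⟨w, n, g, hc, hdisj⟩
    push Not at hdisj
    obtain ⟨i, hi, i', hi', hne, hmeet⟩ := hdisj
    obtain ⟨x, hx, hx'⟩ := Set.not_disjoint_iff.1 hmeet
    exact ih _ (erase_ssubset hi') (hc.merge hsymm htri hf hi' hi hne.symm hx' hx)

end IsBallCover

end BallMerging

theorem stmt_4_general {X : Type*} (d : X → X → ℕ∞)
    (hsymm : ∀ x y, d x y = d y x) (hself : ∀ x, d x x = 0)
    (htri : ∀ x y z, d x z ≤ d x y + d y z)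
    (f : ℕ → ℕ → ℕ)
    (hf : ∀ n₁ n₂ r₁ r₂ : ℕ, 2 * f n₁ r₁ + f n₂ r₂ ≤ f (n₁ + n₂ + 1) (max r₁ r₂))
    (m : ℕ) (a : Fin m → X) (r : Fin m → ℕ) :
    ∃ (w : Finset (Fin m)) (nn : Fin m → ℕ) (g : Fin m → Fin m),
      (∀ j, g j ∈ w) ∧ (∀ i ∈ w, g i = i) ∧
      (∑ i ∈ w, nn i) ≤ m - w.card ∧
      (∀ i ∈ w, ∀ i' ∈ w, i ≠ i' →
        Disjoint
          {x : X | d x (a i) ≤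
            (f (nn i) ((Finset.univ.filter (fun j => g j = i)).sup r) : ℕ∞)}
          {x : X | d x (a i') ≤
            (f (nn i') ((Finset.univ.filter (fun j => g j = i')).sup r) : ℕ∞)}) ∧
      (∀ j : Fin m, ∃ i ∈ w,
        d (a j) (a i) ≤
          (f (nn i) ((Finset.univ.filter (fun j' => g j' = i)).sup r) : ℕ∞)) := by
  obtain ⟨w, nn, g, hc, hdisj⟩ :=
    (IsBallCover.singletons (f := f) (a := a) (r := r) hself).exists_pairwise_disjoint
      hsymm htri hf
  have hbudget := hc.budget
  rw [Fintype.card_fin] at hbudget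
  exact ⟨w, nn, g, hc.mem, hc.map_self, by omega, hdisj,
    fun j => ⟨g j, hc.mem j, hc.cover j⟩⟩

theorem stmt_4 {X : Type*} (d : X → X → ℕ∞)
    (hsymm : ∀ x y, d x y = d y x) (hself : ∀ x, d x x = 0)
    (htri : ∀ x y z, d x z ≤ d x y + d y z)
    (f : ℕ → ℕ → ℕ)
    (hmono_n : ∀ r : ℕ, Monotone (fun n => f n r))
    (hmono_r : ∀ n : ℕ, Monotone (f n))
    (hf : ∀ n₁ n₂ r₁ r₂ : ℕ, 2 * f n₁ r₁ + f n₂ r₂ ≤ f (n₁ + n₂ + 1) (max r₁ r₂))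
    (m : ℕ) (a : Fin m → X) (r : Fin m → ℕ) :
    ∃ (w : Finset (Fin m)) (nn : Fin m → ℕ) (g : Fin m → Fin m),
      (∀ j, g j ∈ w) ∧ (∀ i ∈ w, g i = i) ∧
      (∑ i ∈ w, nn i) ≤ m - w.card ∧
      (∀ i ∈ w, ∀ i' ∈ w, i ≠ i' →
        Disjoint
          {x : X | d x (a i) ≤
            (f (nn i) ((Finset.univ.filter (fun j => g j = i)).sup r) : ℕ∞)}
          {x : X | d x (a i') ≤
            (f (nn i') ((Finset.univ.filter (fun j => g j = i')).sup r) : ℕ∞)}) ∧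
      (∀ j : Fin m, ∃ i ∈ w,
        d (a j) (a i) ≤
          (f (nn i) ((Finset.univ.filter (fun j' => g j' = i)).sup r) : ℕ∞)) :=
  stmt_4_general d hsymm hself htri f hf m a r
end

section
/- Let τ be a finite relational vocabulary containing a binary relation <, and let M¹_i, M²_i (i < k) be finite τ-structures whose < is a linear order, with pairwise disjoint universes within each family. If for each i < k the structures M¹_i and M²_i satisfy the same first-order sentences of quantifier depth ≤ d, then the ordered sums Σ_{i<k} M¹_i and Σ_{i<k} M²_i satisfy the same first-order sentences of quantifier depth ≤ d. -/
open FirstOrder FirstOrder.Language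

/-- Quantifier depth of a bounded first-order formula. -/
def qdepth {L : Language} {α : Type*} : ∀ {n : ℕ}, L.BoundedFormula α n → ℕ
  | _, .falsum => 0
  | _, .equal _ _ => 0
  | _, .rel _ _ => 0
  | _, .imp f g => max (qdepth f) (qdepth g)
  | _, .all f => qdepth f + 1

/-- The ordered sum of a (finitely indexed) family of structures for a relational
language with a distinguished binary relation `lt`: the universe is the disjoint
union, every relation is interpreted as the union of its interpretations in the
summands, except that `lt` additionally holds between any element of an earlier
summand and any element of a later summand. -/
def orderedSum {L : Language} [L.IsRelational] {k : ℕ} (A : Fin k → Type*)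
    (S : ∀ i, L.Structure (A i)) (lt : L.Relations 2) :
    L.Structure (Σ i, A i) where
  funMap := fun f _ => isEmptyElim f
  RelMap := fun {n} R x =>
    (∃ (i : Fin k) (y : Fin n → A i), (∀ j, x j = ⟨i, y j⟩) ∧ (S i).RelMap R y) ∨
    (∃ h : n = 2, HEq R lt ∧
      (x (Fin.cast h.symm 0)).1 < (x (Fin.cast h.symm 1)).1)

/-- The depth-`d` first-order theory of a structure. -/
def thd {L : Language} (d : ℕ) (α : Type*) (S : L.Structure α) : Set L.Sentence :=
  {φ | qdepth φ ≤ d ∧ @Sentence.Realize L α S φ}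

namespace OSP
variable {L : Language}

section Basic
variable {M N : Type}

/-- Atomic equivalence of two tuples. -/
def atEq (SM : L.Structure M) (SN : L.Structure N) {α : Type} (v : α → M) (w : α → N) : Prop :=
  (∀ (n : ℕ) (R : L.Relations n) (f : Fin n → α),
      SM.RelMap R (v ∘ f) ↔ SN.RelMap R (w ∘ f)) ∧
  ∀ j₁ j₂ : α, v j₁ = v j₂ ↔ w j₁ = w j₂

/-- Back-and-forth equivalence of depth `d`. -/
def BF (SM : L.Structure M) (SN : L.Structure N) : ℕ → ∀ {α : Type}, (α → M) → (α → N) → Prop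
  | 0, _, v, w => atEq SM SN v w
  | d+1, _, v, w => atEq SM SN v w ∧
      (∀ a : M, ∃ b : N, BF SM SN d (fun o : Option _ => o.elim a v) (fun o : Option _ => o.elim b w)) ∧
      (∀ b : N, ∃ a : M, BF SM SN d (fun o : Option _ => o.elim a v) (fun o : Option _ => o.elim b w))

variable {SM : L.Structure M} {SN : L.Structure N}

lemma BF_atEq {d : ℕ} {α : Type} {v : α → M} {w : α → N} (h : BF SM SN d v w) :
    atEq SM SN v w := by
  cases d with
  | zero => exact h
  | succ d => exact h.1

lemma atEq_comp {α β : Type} (g : β → α) {v : α → M} {w : α → N} (h : atEq SM SN v w) :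
    atEq SM SN (v ∘ g) (w ∘ g) :=
  ⟨fun n R f => h.1 n R (g ∘ f), fun j₁ j₂ => h.2 (g j₁) (g j₂)⟩

lemma BF_comp (d : ℕ) : ∀ {α β : Type} (g : β → α) {v : α → M} {w : α → N},
    BF SM SN d v w → BF SM SN d (v ∘ g) (w ∘ g) := by
  induction d with
  | zero => intro α β g v w h; exact atEq_comp g h
  | succ d ih =>
    intro α β g v w h
    refine ⟨atEq_comp g h.1, fun a => ?_, fun b => ?_⟩
    · obtain ⟨b, hb⟩ := h.2.1 a
      refine ⟨b, ?_⟩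
      have h2 := ih (Option.map g) hb
      have e1 : (fun o : Option α => o.elim a v) ∘ Option.map g
          = fun o : Option β => o.elim a (v ∘ g) := by funext o; cases o <;> rfl
      have e2 : (fun o : Option α => o.elim b w) ∘ Option.map g
          = fun o : Option β => o.elim b (w ∘ g) := by funext o; cases o <;> rfl
      rw [e1, e2] at h2
      exact h2
    · obtain ⟨a, ha⟩ := h.2.2 b
      refine ⟨a, ?_⟩
      have h2 := ih (Option.map g) ha
      have e1 : (fun o : Option α => o.elim a v) ∘ Option.map g
          = fun o : Option β => o.elim a (v ∘ g) := by funext o; cases o <;> rfl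
      have e2 : (fun o : Option α => o.elim b w) ∘ Option.map g
          = fun o : Option β => o.elim b (w ∘ g) := by funext o; cases o <;> rfl
      rw [e1, e2] at h2
      exact h2

lemma BF_succ_mono (d : ℕ) : ∀ {α : Type} {v : α → M} {w : α → N},
    BF SM SN (d+1) v w → BF SM SN d v w := by
  induction d with
  | zero => exact fun h => h.1
  | succ d ih =>
    intro α v w h
    exact ⟨h.1, fun a => (h.2.1 a).imp (fun b hb => ih hb),
      fun b => (h.2.2 b).imp (fun a ha => ih ha)⟩

lemma BF_snoc {d m : ℕ} {v : Fin m → M} {w : Fin m → N} {a : M} {b : N}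
    (h : BF SM SN d (fun o : Option (Fin m) => o.elim a v) (fun o : Option (Fin m) => o.elim b w)) :
    BF SM SN d (Fin.snoc v a) (Fin.snoc w b) := by
  have h2 := BF_comp (SM := SM) (SN := SN) d
    (fun j : Fin (m+1) => (Fin.lastCases none some j : Option (Fin m))) h
  have e1 : (fun o : Option (Fin m) => o.elim a v) ∘
      (fun j : Fin (m+1) => (Fin.lastCases none some j : Option (Fin m))) = Fin.snoc v a := by
    funext j
    refine Fin.lastCases ?_ ?_ j <;> simp
  have e2 : (fun o : Option (Fin m) => o.elim b w) ∘
      (fun j : Fin (m+1) => (Fin.lastCases none some j : Option (Fin m))) = Fin.snoc w b := by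
    funext j
    refine Fin.lastCases ?_ ?_ j <;> simp
  rwa [e1, e2] at h2

lemma BF_optionext {d m : ℕ} {v : Fin m → M} {w : Fin m → N} {a : M} {b : N}
    (h : BF SM SN d (Fin.snoc v a) (Fin.snoc w b)) :
    BF SM SN d (fun o : Option (Fin m) => o.elim a v) (fun o : Option (Fin m) => o.elim b w) := by
  have h2 := BF_comp (SM := SM) (SN := SN) d
    (fun o : Option (Fin m) => (o.elim (Fin.last m) Fin.castSucc : Fin (m+1))) h
  have e1 : (Fin.snoc v a : Fin (m+1) → M) ∘
      (fun o : Option (Fin m) => (o.elim (Fin.last m) Fin.castSucc : Fin (m+1)))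
      = fun o : Option (Fin m) => o.elim a v := by
    funext o; cases o <;> simp
  have e2 : (Fin.snoc w b : Fin (m+1) → N) ∘
      (fun o : Option (Fin m) => (o.elim (Fin.last m) Fin.castSucc : Fin (m+1)))
      = fun o : Option (Fin m) => o.elim b w := by
    funext o; cases o <;> simp
  rwa [e1, e2] at h2

end Basic

section Realize
variable [L.IsRelational] {M N : Type}

/-- In a relational language, every term is a variable; extract its index. -/
def tIdx {γ : Type} : L.Term (Empty ⊕ γ) → γ
  | .var (Sum.inl e) => e.elim
  | .var (Sum.inr x) => x
  | .func f _ => isEmptyElim f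

lemma realize_tIdx (SM : L.Structure M) {γ : Type} (ev : Empty → M) (v : γ → M)
    (t : L.Term (Empty ⊕ γ)) :
    @Term.realize L M SM _ (Sum.elim ev v) t = v (tIdx t) := by
  cases t with
  | var x =>
    cases x with
    | inl e => exact e.elim
    | inr x => rfl
  | func f _ => exact isEmptyElim f

variable {SM : L.Structure M} {SN : L.Structure N}

lemma BF_realize {m : ℕ} (φ : L.BoundedFormula Empty m) :
    ∀ {d : ℕ} {v : Fin m → M} {w : Fin m → N}, BF SM SN d v w → qdepth φ ≤ d →
      (@BoundedFormula.Realize L M SM Empty m φ default v ↔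
       @BoundedFormula.Realize L N SN Empty m φ default w) := by
  induction φ with
  | falsum => intro d v w _ _; exact Iff.rfl
  | equal t₁ t₂ =>
    intro d v w h _
    show (Term.realize _ t₁ = Term.realize _ t₂) ↔ (Term.realize _ t₁ = Term.realize _ t₂)
    rw [realize_tIdx SM, realize_tIdx SM, realize_tIdx SN, realize_tIdx SN]
    exact (BF_atEq h).2 (tIdx t₁) (tIdx t₂)
  | rel R ts =>
    intro d v w h _
    show SM.RelMap R _ ↔ SN.RelMap R _
    have e1 : (fun i => @Term.realize L M SM _ (Sum.elim default v) (ts i))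
        = v ∘ (fun i => tIdx (ts i)) := by
      funext i; exact realize_tIdx SM default v (ts i)
    have e2 : (fun i => @Term.realize L N SN _ (Sum.elim default w) (ts i))
        = w ∘ (fun i => tIdx (ts i)) := by
      funext i; exact realize_tIdx SN default w (ts i)
    rw [show (SM.RelMap R fun i => @Term.realize L M SM _ (Sum.elim default v) (ts i)) =
        SM.RelMap R (v ∘ fun i => tIdx (ts i)) from congrArg _ e1,
      show (SN.RelMap R fun i => @Term.realize L N SN _ (Sum.elim default w) (ts i)) =
        SN.RelMap R (w ∘ fun i => tIdx (ts i)) from congrArg _ e2]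
    exact (BF_atEq h).1 _ R (fun i => tIdx (ts i))
  | imp f g ihf ihg =>
    intro d v w h hd
    have hd' : qdepth f ≤ d ∧ qdepth g ≤ d := by
      have : max (qdepth f) (qdepth g) ≤ d := hd
      omega
    show (_ → _) ↔ (_ → _)
    exact imp_congr (ihf h hd'.1) (ihg h hd'.2)
  | all f ihf =>
    intro d v w h hd
    have hd1 : qdepth f + 1 ≤ d := hd
    cases d with
    | zero => omega
    | succ e =>
      have hf : qdepth f ≤ e := by omega
      show (∀ a : M, _) ↔ (∀ b : N, _)
      constructor
      · intro hM b
        obtain ⟨a, ha⟩ := h.2.2 b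
        exact (ihf (BF_snoc ha) hf).mp (hM a)
      · intro hN a
        obtain ⟨b, hb⟩ := h.2.1 a
        exact (ihf (BF_snoc hb) hf).mpr (hN b)

end Realize

section Converse
variable {L : Language} [L.IsRelational] {M N : Type}

lemma qdepth_not {γ : Type*} {m : ℕ} (φ : L.BoundedFormula γ m) : qdepth φ.not = qdepth φ := by
  simp [BoundedFormula.not, qdepth]

lemma qdepth_inf {γ : Type*} {m : ℕ} (φ ψ : L.BoundedFormula γ m) :
    qdepth (φ ⊓ ψ) = max (qdepth φ) (qdepth ψ) := by
  rw [show φ ⊓ ψ = (φ.imp ψ.not).not from rfl]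
  simp [qdepth_not, qdepth]

lemma qdepth_top {γ : Type*} {m : ℕ} : qdepth (⊤ : L.BoundedFormula γ m) = 0 := by
  rw [show (⊤ : L.BoundedFormula γ m) = (BoundedFormula.falsum).not from rfl]
  simp [qdepth_not, qdepth]

lemma qdepth_ex {γ : Type*} {m : ℕ} (φ : L.BoundedFormula γ (m+1)) :
    qdepth φ.ex = qdepth φ + 1 := by
  rw [show φ.ex = φ.not.all.not from rfl]
  simp [qdepth_not, qdepth]

lemma qdepth_foldr {γ : Type*} {m : ℕ} (l : List (L.BoundedFormula γ m)) {d : ℕ}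
    (h : ∀ φ ∈ l, qdepth φ ≤ d) : qdepth (l.foldr (· ⊓ ·) ⊤) ≤ d := by
  induction l with
  | nil => simp [qdepth_top]
  | cons φ l ih =>
    simp only [List.foldr_cons, qdepth_inf]
    exact max_le (h φ (by simp)) (ih (fun ψ hψ => h ψ (by simp [hψ])))

variable {SM : L.Structure M} {SN : L.Structure N}

/-- The "forth" property: a single round of the game, extracted from depth-(d+1)
elementary equivalence, assuming the right side is finite. -/
lemma forth_aux (hN : Finite N) {d m : ℕ} {v : Fin m → M} {w : Fin m → N}
    (h : ∀ φ : L.BoundedFormula Empty m, qdepth φ ≤ d + 1 →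
      (@BoundedFormula.Realize L M SM Empty m φ default v ↔
       @BoundedFormula.Realize L N SN Empty m φ default w)) (a : M) :
    ∃ b : N, ∀ φ : L.BoundedFormula Empty (m+1), qdepth φ ≤ d →
      (@BoundedFormula.Realize L M SM Empty (m+1) φ default (Fin.snoc v a) ↔
       @BoundedFormula.Realize L N SN Empty (m+1) φ default (Fin.snoc w b)) := by
  classical
  by_contra hno
  push_neg at hno
  have hb : ∀ b : N, ∃ ψ : L.BoundedFormula Empty (m+1), qdepth ψ ≤ d ∧
      @BoundedFormula.Realize L M SM Empty (m+1) ψ default (Fin.snoc v a) ∧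
      ¬ @BoundedFormula.Realize L N SN Empty (m+1) ψ default (Fin.snoc w b) := by
    intro b
    obtain ⟨φ, hφd, hφ⟩ := hno b
    rcases hφ with ⟨hP, hQ⟩ | ⟨hP, hQ⟩
    · exact ⟨φ, hφd, hP, hQ⟩
    · exact ⟨φ.not, by rw [qdepth_not]; exact hφd, hP, fun hn => hn hQ⟩
  choose F hFd hFM hFN using hb
  letI := Fintype.ofFinite N
  set l : List (L.BoundedFormula Empty (m+1)) := (Finset.univ : Finset N).toList.map F with hl
  have hmem : ∀ ψ ∈ l, ∃ b : N, ψ = F b := by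
    intro ψ hψ
    obtain ⟨b, _, rfl⟩ := List.mem_map.mp hψ
    exact ⟨b, rfl⟩
  set χ : L.BoundedFormula Empty (m+1) := l.foldr (· ⊓ ·) ⊤ with hχ
  have hχd : qdepth χ ≤ d := by
    apply qdepth_foldr
    intro ψ hψ
    obtain ⟨b, rfl⟩ := hmem ψ hψ
    exact hFd b
  have hMex : @BoundedFormula.Realize L M SM Empty m χ.ex default v := by
    rw [BoundedFormula.realize_ex]
    refine ⟨a, ?_⟩
    rw [BoundedFormula.realize_foldr_inf]
    intro ψ hψ
    obtain ⟨b, rfl⟩ := hmem ψ hψ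
    exact hFM b
  have hdex : qdepth χ.ex ≤ d + 1 := by rw [qdepth_ex]; omega
  have hNex := (h χ.ex hdex).mp hMex
  rw [BoundedFormula.realize_ex] at hNex
  obtain ⟨b, hb'⟩ := hNex
  rw [BoundedFormula.realize_foldr_inf] at hb'
  exact hFN b (hb' (F b) (by
    rw [hl]
    exact List.mem_map.mpr ⟨b, Finset.mem_toList.mpr (Finset.mem_univ b), rfl⟩))

lemma realize_BF (hM : Finite M) (hN : Finite N) :
    ∀ (d : ℕ) {m : ℕ} {v : Fin m → M} {w : Fin m → N},
    (∀ φ : L.BoundedFormula Empty m, qdepth φ ≤ d →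
      (@BoundedFormula.Realize L M SM Empty m φ default v ↔
       @BoundedFormula.Realize L N SN Empty m φ default w)) →
    BF SM SN d v w := by
  have hat : ∀ (d : ℕ) {m : ℕ} {v : Fin m → M} {w : Fin m → N},
      (∀ φ : L.BoundedFormula Empty m, qdepth φ ≤ d →
        (@BoundedFormula.Realize L M SM Empty m φ default v ↔
         @BoundedFormula.Realize L N SN Empty m φ default w)) → atEq SM SN v w := by
    intro d m v w h
    constructor
    · intro n R f
      have := h (BoundedFormula.rel R (fun j => Term.var (Sum.inr (f j)))) (by simp [qdepth])
      exact this
    · intro j₁ j₂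
      have := h (BoundedFormula.equal (Term.var (Sum.inr j₁)) (Term.var (Sum.inr j₂)))
        (by simp [qdepth])
      exact this
  intro d
  induction d with
  | zero => intro m v w h; exact hat 0 h
  | succ d ih =>
    intro m v w h
    refine ⟨hat (d+1) h, fun a => ?_, fun b => ?_⟩
    · obtain ⟨b, hb⟩ := forth_aux (SM := SM) (SN := SN) hN h a
      exact ⟨b, BF_optionext (ih hb)⟩
    · obtain ⟨a, ha⟩ := forth_aux (SM := SN) (SN := SM) hM
        (fun φ hφ => (h φ hφ).symm) b
      refine ⟨a, BF_optionext (ih (fun φ hφ => (ha φ hφ).symm))⟩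

end Converse

section Sum
variable [L.IsRelational] {k : ℕ} {A B : Fin k → Type}

/-- Restriction of a tuple in a sigma type to the part lying in component `i`. -/
def restr {C : Fin k → Type} {α : Type} (v : α → Σ i, C i) (p : α → Fin k)
    (h : ∀ j, (v j).1 = p j) (i : Fin k) (j : {j // p j = i}) : C i :=
  cast (congrArg C ((h j.1).trans j.2)) (v j.1).2

lemma sigma_eq_iff {C : Fin k → Type} {i : Fin k} {u₁ u₂ : Σ i, C i}
    (h₁ : u₁.1 = i) (h₂ : u₂.1 = i) :
    u₁ = u₂ ↔ cast (congrArg C h₁) u₁.2 = cast (congrArg C h₂) u₂.2 := by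
  obtain ⟨i₁, x₁⟩ := u₁
  obtain ⟨i₂, x₂⟩ := u₂
  dsimp only at h₁ h₂
  subst h₁
  subst h₂
  simp

lemma exists_y_iff {C : Fin k → Type} {i : Fin k} {n : ℕ} (u : Fin n → Σ i, C i)
    (P : (Fin n → C i) → Prop) :
    (∃ y : Fin n → C i, (∀ j, u j = ⟨i, y j⟩) ∧ P y) ↔
    (∃ h : ∀ j, (u j).1 = i, P (fun j => cast (congrArg C (h j)) (u j).2)) := by
  constructor
  · rintro ⟨y, hy, hP⟩
    have h : ∀ j, (u j).1 = i := fun j => by rw [hy j]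
    refine ⟨h, ?_⟩
    have e : (fun j => cast (congrArg C (h j)) (u j).2) = y := by
      funext j
      have := (sigma_eq_iff (h j) (rfl : (⟨i, y j⟩ : Σ i, C i).1 = i)).mp (hy j)
      simpa using this
    rw [e]; exact hP
  · rintro ⟨h, hP⟩
    refine ⟨fun j => cast (congrArg C (h j)) (u j).2, fun j => ?_, hP⟩
    exact (sigma_eq_iff (h j) (rfl : (⟨i, cast (congrArg C (h j)) (u j).2⟩ : Σ i, C i).1 = i)).mpr
      (by simp)

lemma atEq_sum (SA : ∀ i, L.Structure (A i)) (SB : ∀ i, L.Structure (B i)) (lt : L.Relations 2)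
    {α : Type} {v : α → Σ i, A i} {w : α → Σ i, B i}
    (hidx : ∀ j, (v j).1 = (w j).1)
    (hc : ∀ i : Fin k, atEq (SA i) (SB i)
        (restr v (fun j => (v j).1) (fun _ => rfl) i)
        (restr w (fun j => (v j).1) (fun j => (hidx j).symm) i)) :
    atEq (orderedSum A SA lt) (orderedSum B SB lt) v w := by
  constructor
  · intro n R f
    show ((∃ i y, (∀ j, (v ∘ f) j = ⟨i, y j⟩) ∧ (SA i).RelMap R y) ∨
        (∃ h : n = 2, HEq R lt ∧ ((v ∘ f) (Fin.cast h.symm 0)).1 < ((v ∘ f) (Fin.cast h.symm 1)).1))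
      ↔ ((∃ i y, (∀ j, (w ∘ f) j = ⟨i, y j⟩) ∧ (SB i).RelMap R y) ∨
        (∃ h : n = 2, HEq R lt ∧ ((w ∘ f) (Fin.cast h.symm 0)).1 < ((w ∘ f) (Fin.cast h.symm 1)).1))
    apply or_congr
    · apply exists_congr; intro i
      rw [exists_y_iff (v ∘ f) ((SA i).RelMap R),
          exists_y_iff (w ∘ f) ((SB i).RelMap R)]
      constructor
      · rintro ⟨h, hR⟩
        refine ⟨fun j => ((hidx (f j)).symm.trans (h j)), ?_⟩
        exact ((hc i).1 n R (fun j => (⟨f j, h j⟩ : {j // (v j).1 = i}))).mp hR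
      · rintro ⟨h, hR⟩
        have h' : ∀ j, (v (f j)).1 = i := fun j => (hidx (f j)).trans (h j)
        refine ⟨h', ?_⟩
        exact ((hc i).1 n R (fun j => (⟨f j, h' j⟩ : {j // (v j).1 = i}))).mpr hR
    · apply exists_congr; intro h
      apply and_congr_right; intro _
      rw [show ((v ∘ f) (Fin.cast h.symm 0)).1 = ((w ∘ f) (Fin.cast h.symm 0)).1 from
          hidx (f (Fin.cast h.symm 0)),
        show ((v ∘ f) (Fin.cast h.symm 1)).1 = ((w ∘ f) (Fin.cast h.symm 1)).1 from
          hidx (f (Fin.cast h.symm 1))]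
  · intro j₁ j₂
    by_cases hij : (v j₁).1 = (v j₂).1
    · rw [sigma_eq_iff (C := A) hij (rfl : (v j₂).1 = (v j₂).1),
        sigma_eq_iff (C := B) ((hidx j₁).symm.trans hij) ((hidx j₂).symm)]
      exact (hc (v j₂).1).2 ⟨j₁, hij⟩ ⟨j₂, rfl⟩
    · have hw : (w j₁).1 ≠ (w j₂).1 := by rw [← hidx, ← hidx]; exact hij
      exact iff_of_false (fun e => hij (congrArg Sigma.fst e)) (fun e => hw (congrArg Sigma.fst e))

lemma BF_sum (SA : ∀ i, L.Structure (A i)) (SB : ∀ i, L.Structure (B i)) (lt : L.Relations 2) :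
    ∀ (d : ℕ) {α : Type} (v : α → Σ i, A i) (w : α → Σ i, B i)
    (hidx : ∀ j, (v j).1 = (w j).1),
    (∀ i : Fin k, BF (SA i) (SB i) d
        (restr v (fun j => (v j).1) (fun _ => rfl) i)
        (restr w (fun j => (v j).1) (fun j => (hidx j).symm) i)) →
    BF (orderedSum A SA lt) (orderedSum B SB lt) d v w := by
  intro d
  induction d with
  | zero => intro α v w hidx hc; exact atEq_sum SA SB lt hidx hc
  | succ d ih =>
    intro α v w hidx hc
    refine ⟨atEq_sum SA SB lt hidx (fun i => BF_atEq (hc i)), ?_, ?_⟩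
    · rintro ⟨i₀, a'⟩
      obtain ⟨b', hb'⟩ := (hc i₀).2.1 a'
      refine ⟨⟨i₀, b'⟩, ?_⟩
      have hidx' : ∀ o : Option α,
          ((fun o : Option α => o.elim ⟨i₀, a'⟩ v) o).1 =
          ((fun o : Option α => o.elim ⟨i₀, b'⟩ w) o).1 := by
        intro o; cases o with
        | none => rfl
        | some j => exact hidx j
      apply ih _ _ hidx'
      intro i
      by_cases hi : i = i₀
      · subst hi
        have key := BF_comp (SM := SA i) (SN := SB i) d
          (fun o : {o : Option α // ((fun o : Option α => o.elim ⟨i, a'⟩ v) o).1 = i} =>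
            (match o with
              | ⟨none, _⟩ => none
              | ⟨some j, hj⟩ => some ⟨j, hj⟩ : Option {j // (v j).1 = i}))
          hb'
        convert key using 1
        · funext o; rcases o with ⟨o, ho⟩; cases o <;> rfl
        · funext o; rcases o with ⟨o, ho⟩; cases o <;> rfl
      · have key := BF_comp (SM := SA i) (SN := SB i) d
          (fun o : {o : Option α // ((fun o : Option α => o.elim ⟨i₀, a'⟩ v) o).1 = i} =>
            (match o with
              | ⟨none, h⟩ => (hi h.symm).elim
              | ⟨some j, hj⟩ => ⟨j, hj⟩ : {j // (v j).1 = i}))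
          (BF_succ_mono d (hc i))
        convert key using 1
        · funext o; rcases o with ⟨o, ho⟩
          cases o with
          | none => exact (hi ho.symm).elim
          | some j => rfl
        · funext o; rcases o with ⟨o, ho⟩
          cases o with
          | none => exact (hi ho.symm).elim
          | some j => rfl
    · rintro ⟨i₀, b'⟩
      obtain ⟨a', ha'⟩ := (hc i₀).2.2 b'
      refine ⟨⟨i₀, a'⟩, ?_⟩
      have hidx' : ∀ o : Option α,
          ((fun o : Option α => o.elim ⟨i₀, a'⟩ v) o).1 =
          ((fun o : Option α => o.elim ⟨i₀, b'⟩ w) o).1 := by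
        intro o; cases o with
        | none => rfl
        | some j => exact hidx j
      apply ih _ _ hidx'
      intro i
      by_cases hi : i = i₀
      · subst hi
        have key := BF_comp (SM := SA i) (SN := SB i) d
          (fun o : {o : Option α // ((fun o : Option α => o.elim ⟨i, a'⟩ v) o).1 = i} =>
            (match o with
              | ⟨none, _⟩ => none
              | ⟨some j, hj⟩ => some ⟨j, hj⟩ : Option {j // (v j).1 = i}))
          ha'
        convert key using 1
        · funext o; rcases o with ⟨o, ho⟩; cases o <;> rfl
        · funext o; rcases o with ⟨o, ho⟩; cases o <;> rfl
      · have key := BF_comp (SM := SA i) (SN := SB i) d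
          (fun o : {o : Option α // ((fun o : Option α => o.elim ⟨i₀, a'⟩ v) o).1 = i} =>
            (match o with
              | ⟨none, h⟩ => (hi h.symm).elim
              | ⟨some j, hj⟩ => ⟨j, hj⟩ : {j // (v j).1 = i}))
          (BF_succ_mono d (hc i))
        convert key using 1
        · funext o; rcases o with ⟨o, ho⟩
          cases o with
          | none => exact (hi ho.symm).elim
          | some j => rfl
        · funext o; rcases o with ⟨o, ho⟩
          cases o with
          | none => exact (hi ho.symm).elim
          | some j => rfl

end Sum
end OSP

theorem stmt_7 {L : Language} [L.IsRelational] [∀ n, Finite (L.Relations n)]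
    (lt : L.Relations 2) (d k : ℕ)
    (A B : Fin k → Type) [∀ i, Fintype (A i)] [∀ i, Fintype (B i)]
    (SA : ∀ i, L.Structure (A i)) (SB : ∀ i, L.Structure (B i))
    (hlinA : ∀ i, IsLinearOrder (A i) (fun a b => (SA i).RelMap lt ![a, b]))
    (hlinB : ∀ i, IsLinearOrder (B i) (fun a b => (SB i).RelMap lt ![a, b]))
    (heq : ∀ i, thd d (A i) (SA i) = thd d (B i) (SB i)) :
    thd d (Σ i, A i) (orderedSum A SA lt) = thd d (Σ i, B i) (orderedSum B SB lt) := by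
  classical
  have hsent : ∀ i, ∀ φ : L.Sentence, qdepth φ ≤ d →
      (@Sentence.Realize L (A i) (SA i) φ ↔ @Sentence.Realize L (B i) (SB i) φ) := by
    intro i φ hφ
    have h1 := Set.ext_iff.mp (heq i) φ
    simp only [thd, Set.mem_setOf_eq] at h1
    exact ⟨fun h => (h1.mp ⟨hφ, h⟩).2, fun h => (h1.mpr ⟨hφ, h⟩).2⟩
  have hBF : ∀ i, OSP.BF (SA i) (SB i) d (default : Fin 0 → A i) (default : Fin 0 → B i) := by
    intro i
    apply OSP.realize_BF (Finite.of_fintype _) (Finite.of_fintype _) d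
    intro φ hφ
    exact hsent i φ hφ
  have hSum : OSP.BF (orderedSum A SA lt) (orderedSum B SB lt) d
      (default : Fin 0 → Σ i, A i) (default : Fin 0 → Σ i, B i) := by
    apply OSP.BF_sum SA SB lt d _ _ (fun j => Fin.elim0 j)
    intro i
    have key := OSP.BF_comp (SM := SA i) (SN := SB i) d
      (fun j : {j : Fin 0 // ((default : Fin 0 → Σ i, A i) j).1 = i} => j.1) (hBF i)
    convert key using 1 <;> funext j <;> exact Fin.elim0 j.1
  ext φ
  simp only [thd, Set.mem_setOf_eq]
  constructor <;> rintro ⟨hφ, h⟩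
  · exact ⟨hφ, (OSP.BF_realize φ hSum hφ).mp h⟩
  · exact ⟨hφ, (OSP.BF_realize φ hSum hφ).mpr h⟩
end

section
/- For a fixed finite relational vocabulary τ containing < and a fixed quantifier depth d, there is an associative binary operation ⊕ on the (finite) set of complete depth-d first-order theories of finite linearly ordered τ-structures such that the depth-d theory of an ordered sum Σ_{i<k} M_i equals the ⊕-product of the depth-d theories of the summands M_i (in order). -/
open FirstOrder FirstOrder.Language

/-- The collection of depth-`d` theories of finite linearly ordered `L`-structures. -/
def theoriesD {L : Language} (lt : L.Relations 2) (d : ℕ) : Set (Set L.Sentence) :=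
  {T | ∃ (α : Type) (S : L.Structure α), Finite α ∧
    IsLinearOrder α (fun a b => S.RelMap lt ![a, b]) ∧ T = thd d α S}

/-!
For finite structures, agreeing on all sentences of quantifier depth `≤ d` is the same as
Duplicator winning the `d`-round Ehrenfeucht–Fraïssé game: in the forth step, conjoining one
separating formula for each of the finitely many candidate answers yields a depth-`d + 1`
sentence that would otherwise tell the structures apart. Winning strategies on the summands combine
into one on the ordered sum, since the only atomic facts linking the two summands are the
`lt`-facts "left below right". Hence the depth-`d` theory of `M ⊕ N` depends only on those of `M`
and `N`, which gives the operation. Associativity and the formula for `k + 1` summands then follow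
from the isomorphisms `(M ⊕ N) ⊕ P ≅ M ⊕ (N ⊕ P)` and `Σ i ≤ k, A i ≅ (Σ i < k, A i) ⊕ A k`.
-/

namespace FefermanVaught

open BoundedFormula

variable {L : Language}

section Tuples

variable {ι α β γ δ : Type*}

lemma comp_vec2 (f : α → β) (a b : α) : f ∘ ![a, b] = ![f a, f b] := by
  funext i
  fin_cases i <;> rfl

lemma exists_eq_vec2 (x : Fin 2 → α) : ∃ a b, x = ![a, b] :=
  ⟨x 0, x 1, by ext i; fin_cases i <;> rfl⟩

@[simp]
lemma inl_comp_inj {u v : ι → α} : (Sum.inl ∘ u : ι → α ⊕ β) = Sum.inl ∘ v ↔ u = v :=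
  Sum.inl_injective.comp_left.eq_iff

@[simp]
lemma inr_comp_inj {u v : ι → β} : (Sum.inr ∘ u : ι → α ⊕ β) = Sum.inr ∘ v ↔ u = v :=
  Sum.inr_injective.comp_left.eq_iff

@[simp]
lemma inl_comp_ne_inr_comp [Nonempty ι] (u : ι → α) (v : ι → β) : Sum.inl ∘ u ≠ Sum.inr ∘ v :=
  fun h => Sum.inl_ne_inr (congrFun h (Classical.arbitrary ι))

@[simp]
lemma inr_comp_ne_inl_comp [Nonempty ι] (u : ι → α) (v : ι → β) : Sum.inr ∘ v ≠ Sum.inl ∘ u :=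
  (inl_comp_ne_inr_comp u v).symm

@[simp]
lemma sigma_mk_comp_inj {A : α → Type*} {i : α} {u v : ι → A i} :
    Sigma.mk i ∘ u = Sigma.mk i ∘ v ↔ u = v :=
  sigma_mk_injective.comp_left.eq_iff

lemma sumMap_comp_eq_inl_comp_iff {f : α → γ} {g : β → δ} {v : ι → α ⊕ β} {y : ι → γ} :
    Sum.map f g ∘ v = Sum.inl ∘ y ↔ ∃ p, v = Sum.inl ∘ p ∧ y = f ∘ p := by
  refine ⟨fun h => ?_, fun ⟨p, hv, hy⟩ => by rw [hv, hy]; rfl⟩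
  have (s : ι) : ∃ p, v s = Sum.inl p ∧ y s = f p := by
    have hs := congrFun h s
    rcases hvs : v s with p | q <;> simp_all
  choose p hv hy using this
  exact ⟨p, funext hv, funext hy⟩

lemma sumMap_comp_eq_inr_comp_iff {f : α → γ} {g : β → δ} {v : ι → α ⊕ β} {y : ι → δ} :
    Sum.map f g ∘ v = Sum.inr ∘ y ↔ ∃ q, v = Sum.inr ∘ q ∧ y = g ∘ q := by
  refine ⟨fun h => ?_, fun ⟨q, hv, hy⟩ => by rw [hv, hy]; rfl⟩
  have (s : ι) : ∃ q, v s = Sum.inr q ∧ y s = g q := by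
    have hs := congrFun h s
    rcases hvs : v s with p | q <;> simp_all
  choose q hv hy using this
  exact ⟨q, funext hv, funext hy⟩

lemma snoc_sumMap_comp_inl {m₁ m₂ n : ℕ} (a : Fin m₁ → α) (b : Fin m₂ → β)
    (ρ : Fin n → Fin m₁ ⊕ Fin m₂) (x : α) :
    Fin.snoc (Sum.map a b ∘ ρ) (Sum.inl x) = Sum.map (Fin.snoc a x) b ∘
      Fin.snoc (Sum.map Fin.castSucc id ∘ ρ) (Sum.inl (Fin.last m₁)) := by
  funext j
  induction j using Fin.lastCases with
  | last => simp
  | cast i => rcases ρ i with p | q <;> simp [*]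

lemma snoc_sumMap_comp_inr {m₁ m₂ n : ℕ} (a : Fin m₁ → α) (b : Fin m₂ → β)
    (ρ : Fin n → Fin m₁ ⊕ Fin m₂) (y : β) :
    Fin.snoc (Sum.map a b ∘ ρ) (Sum.inr y) = Sum.map a (Fin.snoc b y) ∘
      Fin.snoc (Sum.map id Fin.castSucc ∘ ρ) (Sum.inr (Fin.last m₂)) := by
  funext j
  induction j using Fin.lastCases with
  | last => simp
  | cast i => rcases ρ i with p | q <;> simp [*]

end Tuples

section QDepth

variable {α : Type*} {n : ℕ}

lemma qdepth_not (φ : L.BoundedFormula α n) : qdepth φ.not = qdepth φ :=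
  max_eq_left (Nat.zero_le _)

lemma qdepth_inf (φ ψ : L.BoundedFormula α n) : qdepth (φ ⊓ ψ) = max (qdepth φ) (qdepth ψ) :=
  (qdepth_not (φ.imp ψ.not)).trans (by rw [qdepth, qdepth_not])

lemma qdepth_ex (φ : L.BoundedFormula α (n + 1)) : qdepth φ.ex = qdepth φ + 1 := by
  simp [qdepth]

lemma qdepth_iInf_le {β : Type*} [Finite β] {f : β → L.BoundedFormula α n} {d : ℕ}
    (hf : ∀ b, qdepth (f b) ≤ d) : qdepth (iInf f) ≤ d := by
  let := Fintype.ofFinite β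
  suffices ∀ l : List (L.BoundedFormula α n), (∀ φ ∈ l, qdepth φ ≤ d) →
      qdepth (l.foldr (· ⊓ ·) ⊤) ≤ d from this _ (by simpa using hf)
  intro l hl
  induction l with
  | nil => exact Nat.zero_le _
  | cons φ l ih =>
    simp only [List.mem_cons, forall_eq_or_imp] at hl
    exact (qdepth_inf _ _).trans_le (max_le hl.1 (ih hl.2))

end QDepth

section EhrenfeuchtFraisse

variable (L) {M N : Type*} [L.Structure M] [L.Structure N]

structure AtomicEquiv {ι : Type*} (a : ι → M) (b : ι → N) : Prop where
  eq_iff : ∀ i j, a i = a j ↔ b i = b j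
  relMap_iff : ∀ {r} (R : L.Relations r) (v : Fin r → ι),
    Structure.RelMap R (a ∘ v) ↔ Structure.RelMap R (b ∘ v)

def DepthEquiv (d : ℕ) {n : ℕ} (a : Fin n → M) (b : Fin n → N) : Prop :=
  ∀ φ : L.BoundedFormula Empty n, qdepth φ ≤ d → (φ.Realize default a ↔ φ.Realize default b)

/-- Duplicator wins the `d`-round Ehrenfeucht–Fraïssé game from the position `(a, b)`. -/
def EFEquiv : ℕ → {n : ℕ} → (Fin n → M) → (Fin n → N) → Prop
  | 0, _, a, b => AtomicEquiv L a b
  | d + 1, _, a, b => EFEquiv d a b ∧ (∀ x, ∃ y, EFEquiv d (Fin.snoc a x) (Fin.snoc b y)) ∧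
      ∀ y, ∃ x, EFEquiv d (Fin.snoc a x) (Fin.snoc b y)

variable {L}

lemma AtomicEquiv.comp {ι κ : Type*} {a : ι → M} {b : ι → N} (h : AtomicEquiv L a b)
    (ρ : κ → ι) : AtomicEquiv L (a ∘ ρ) (b ∘ ρ) :=
  ⟨fun i j => h.eq_iff (ρ i) (ρ j), fun R v => h.relMap_iff R (ρ ∘ v)⟩

lemma EFEquiv.atomicEquiv : ∀ {d n : ℕ} {a : Fin n → M} {b : Fin n → N}, EFEquiv L d a b →
    AtomicEquiv L a b
  | 0, _, _, _, h => h
  | _ + 1, _, _, _, h => h.1.atomicEquiv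

lemma exists_term_eq_var [L.IsRelational] {n : ℕ} (t : L.Term (Empty ⊕ Fin n)) :
    ∃ i, t = Term.var (Sum.inr i) := by
  cases t with
  | var i =>
    rcases i with e | i
    exacts [e.elim, ⟨i, rfl⟩]
  | func f _ => exact isEmptyElim f

lemma EFEquiv.realize_iff [L.IsRelational] {n : ℕ} (φ : L.BoundedFormula Empty n) :
    ∀ {d : ℕ} {a : Fin n → M} {b : Fin n → N}, EFEquiv L d a b → qdepth φ ≤ d →
      (φ.Realize default a ↔ φ.Realize default b) := by
  induction φ with
  | falsum => exact fun _ _ => Iff.rfl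
  | equal t₁ t₂ =>
    intro d a b h _
    obtain ⟨i, rfl⟩ := exists_term_eq_var t₁
    obtain ⟨j, rfl⟩ := exists_term_eq_var t₂
    exact h.atomicEquiv.eq_iff i j
  | rel R ts =>
    intro d a b h _
    choose v hv using fun s => exists_term_eq_var (ts s)
    obtain rfl : ts = fun s => Term.var (Sum.inr (v s)) := funext hv
    exact h.atomicEquiv.relMap_iff R v
  | imp φ ψ ihφ ihψ =>
    intro d a b h hd
    simp only [qdepth, max_le_iff] at hd
    simp only [realize_imp, ihφ h hd.1, ihψ h hd.2]
  | all φ ih =>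
    intro d a b h hd
    obtain ⟨d, rfl⟩ : ∃ e, d = e + 1 := ⟨d - 1, by simp only [qdepth] at hd; omega⟩
    have hφ : qdepth φ ≤ d := by simpa [qdepth] using hd
    simp only [realize_all]
    exact ⟨fun H y => (h.2.2 y).elim fun x hx => (ih hx hφ).mp (H x),
      fun H x => (h.2.1 x).elim fun y hy => (ih hy hφ).mpr (H y)⟩

lemma DepthEquiv.symm {d n : ℕ} {a : Fin n → M} {b : Fin n → N} (h : DepthEquiv L d a b) :
    DepthEquiv L d b a :=
  fun φ hφ => (h φ hφ).symm

lemma DepthEquiv.mono {d e n : ℕ} {a : Fin n → M} {b : Fin n → N} (h : DepthEquiv L e a b)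
    (hde : d ≤ e) : DepthEquiv L d a b :=
  fun φ hφ => h φ (hφ.trans hde)

lemma DepthEquiv.atomicEquiv {d n : ℕ} {a : Fin n → M} {b : Fin n → N}
    (h : DepthEquiv L d a b) : AtomicEquiv L a b where
  eq_iff i j := h (.equal (.var (.inr i)) (.var (.inr j))) (Nat.zero_le d)
  relMap_iff R v := h (.rel R fun s => .var (.inr (v s))) (Nat.zero_le d)

lemma DepthEquiv.exists_snoc [Finite N] {d n : ℕ} {a : Fin n → M} {b : Fin n → N}
    (h : DepthEquiv L (d + 1) a b) (x : M) :
    ∃ y, DepthEquiv L d (Fin.snoc a x) (Fin.snoc b y) := by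
  by_contra! hne
  have hsep (y : N) : ∃ ψ : L.BoundedFormula Empty (n + 1), qdepth ψ ≤ d ∧
      ψ.Realize default (Fin.snoc a x) ∧ ¬ ψ.Realize default (Fin.snoc b y) := by
    obtain ⟨ψ, hψ, hne⟩ := by simpa [DepthEquiv] using hne y
    by_cases hx : ψ.Realize default (Fin.snoc a x)
    · exact ⟨ψ, hψ, hx, fun hy => hne (iff_of_true hx hy)⟩
    · exact ⟨ψ.not, by rwa [qdepth_not], hx, fun hy => hne (iff_of_false hx hy)⟩
  choose ψ hψd hψa hψb using hsep
  have hex : (iInf ψ).ex.Realize default a := realize_ex.2 ⟨x, realize_iInf.2 hψa⟩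
  have hdepth : qdepth (iInf ψ).ex ≤ d + 1 := by
    rw [qdepth_ex]
    exact Nat.succ_le_succ (qdepth_iInf_le hψd)
  obtain ⟨y, hy⟩ := realize_ex.1 ((h _ hdepth).1 hex)
  exact hψb y (realize_iInf.1 hy y)

lemma DepthEquiv.efEquiv [Finite M] [Finite N] : ∀ {d n : ℕ} {a : Fin n → M} {b : Fin n → N},
    DepthEquiv L d a b → EFEquiv L d a b
  | 0, _, _, _, h => h.atomicEquiv
  | d + 1, _, _, _, h => ⟨(h.mono d.le_succ).efEquiv,
      fun x => (h.exists_snoc x).imp fun _ hy => hy.efEquiv,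
      fun y => (h.symm.exists_snoc y).imp fun _ hx => hx.symm.efEquiv⟩

end EhrenfeuchtFraisse

lemma thd_eq_iff_depthEquiv {M N : Type*} {SM : L.Structure M} {SN : L.Structure N} {d : ℕ} :
    thd d M SM = thd d N SN ↔ DepthEquiv L d (default : Fin 0 → M) (default : Fin 0 → N) :=
  ⟨fun h φ hφ => and_congr_right_iff.1 (Set.ext_iff.1 h φ) hφ,
    fun h => Set.ext fun φ => and_congr_right fun hφ => h φ hφ⟩

variable [L.IsRelational]

def orderedSum₂ {M N : Type*} (SM : L.Structure M) (SN : L.Structure N) (lt : L.Relations 2) :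
    L.Structure (M ⊕ N) where
  funMap f _ := isEmptyElim f
  RelMap {r} R x :=
    (∃ y, x = Sum.inl ∘ y ∧ SM.RelMap R y) ∨ (∃ y, x = Sum.inr ∘ y ∧ SN.RelMap R y) ∨
      ∃ h : r = 2, HEq R lt ∧ (x (Fin.cast h.symm 0)).isLeft ∧ (x (Fin.cast h.symm 1)).isRight

section OrderedSum₂

variable {M N M' N' : Type*} {SM : L.Structure M} {SN : L.Structure N} {SM' : L.Structure M'}
  {SN' : L.Structure N'} {lt : L.Relations 2}

lemma orderedSum₂_relMap {r : ℕ} (R : L.Relations r) (x : Fin r → M ⊕ N) :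
    (orderedSum₂ SM SN lt).RelMap R x ↔
      (∃ y, x = Sum.inl ∘ y ∧ SM.RelMap R y) ∨ (∃ y, x = Sum.inr ∘ y ∧ SN.RelMap R y) ∨
      ∃ h : r = 2, HEq R lt ∧ (x (Fin.cast h.symm 0)).isLeft ∧ (x (Fin.cast h.symm 1)).isRight :=
  Iff.rfl

lemma orderedSum₂_relMap_of_not_lt {r : ℕ} {R : L.Relations r} (hR : ¬ ∃ _ : r = 2, HEq R lt)
    (x : Fin r → M ⊕ N) :
    (orderedSum₂ SM SN lt).RelMap R x ↔
      (∃ y, x = Sum.inl ∘ y ∧ SM.RelMap R y) ∨ (∃ y, x = Sum.inr ∘ y ∧ SN.RelMap R y) :=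
  or_congr_right (or_iff_left fun ⟨h, hlt, _⟩ => hR ⟨h, hlt⟩)

@[simp]
lemma orderedSum₂_lt_inl_inl (a b : M) :
    (orderedSum₂ SM SN lt).RelMap lt ![Sum.inl a, Sum.inl b] ↔ SM.RelMap lt ![a, b] := by
  simp [orderedSum₂_relMap, ← comp_vec2]

@[simp]
lemma orderedSum₂_lt_inr_inr (a b : N) :
    (orderedSum₂ SM SN lt).RelMap lt ![Sum.inr a, Sum.inr b] ↔ SN.RelMap lt ![a, b] := by
  simp [orderedSum₂_relMap, ← comp_vec2]

@[simp]
lemma orderedSum₂_lt_inl_inr (a : M) (b : N) :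
    (orderedSum₂ SM SN lt).RelMap lt ![Sum.inl a, Sum.inr b] := by
  simp [orderedSum₂_relMap]

@[simp]
lemma orderedSum₂_lt_inr_inl (a : N) (b : M) :
    ¬ (orderedSum₂ SM SN lt).RelMap lt ![Sum.inr a, Sum.inl b] := by
  simp [orderedSum₂_relMap, funext_iff, Fin.forall_fin_two]

lemma orderedSum₂_relMap_sumMap {ι κ : Type*} (a : ι → M) (b : κ → N) {r : ℕ}
    (R : L.Relations r) (v : Fin r → ι ⊕ κ) :
    (orderedSum₂ SM SN lt).RelMap R (Sum.map a b ∘ v) ↔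
      (∃ p, v = Sum.inl ∘ p ∧ SM.RelMap R (a ∘ p)) ∨
      (∃ q, v = Sum.inr ∘ q ∧ SN.RelMap R (b ∘ q)) ∨
      ∃ h : r = 2, HEq R lt ∧ (v (Fin.cast h.symm 0)).isLeft ∧ (v (Fin.cast h.symm 1)).isRight := by
  simp [orderedSum₂_relMap, sumMap_comp_eq_inl_comp_iff, sumMap_comp_eq_inr_comp_iff]

lemma AtomicEquiv.sumMap {ι κ : Type*} {a : ι → M} {a' : ι → M'} {b : κ → N} {b' : κ → N'}
    (ha : AtomicEquiv L a a') (hb : AtomicEquiv L b b') :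
    @AtomicEquiv L _ _ (orderedSum₂ SM SN lt) (orderedSum₂ SM' SN' lt) _
      (Sum.map a b) (Sum.map a' b') := by
  let := orderedSum₂ SM SN lt
  let := orderedSum₂ SM' SN' lt
  refine ⟨by rintro (i | i) (j | j) <;> simp [ha.eq_iff, hb.eq_iff], fun R v => ?_⟩
  rw [orderedSum₂_relMap_sumMap, orderedSum₂_relMap_sumMap]
  exact or_congr (exists_congr fun p => and_congr_right fun _ => ha.relMap_iff R p)
    (or_congr_left (exists_congr fun q => and_congr_right fun _ => hb.relMap_iff R q))

/-- `ρ` sends each coordinate of the combined tuple to a coordinate of the left or of the right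
tuple. -/
theorem EFEquiv.sumMap {d n m₁ m₂ : ℕ} {a : Fin m₁ → M} {a' : Fin m₁ → M'}
    {b : Fin m₂ → N} {b' : Fin m₂ → N'} (ha : EFEquiv L d a a') (hb : EFEquiv L d b b')
    (ρ : Fin n → Fin m₁ ⊕ Fin m₂) :
    @EFEquiv L _ _ (orderedSum₂ SM SN lt) (orderedSum₂ SM' SN' lt) d n
      (Sum.map a b ∘ ρ) (Sum.map a' b' ∘ ρ) := by
  let := orderedSum₂ SM SN lt
  let := orderedSum₂ SM' SN' lt
  induction d generalizing n m₁ m₂ with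
  | zero => exact (AtomicEquiv.sumMap ha hb).comp ρ
  | succ d ih =>
    refine ⟨ih ha.1 hb.1 ρ, ?_, ?_⟩
    · rintro (x | y)
      · obtain ⟨x', hx⟩ := ha.2.1 x
        refine ⟨.inl x', ?_⟩
        rw [snoc_sumMap_comp_inl a b ρ x, snoc_sumMap_comp_inl a' b' ρ x']
        exact ih hx hb.1 _
      · obtain ⟨y', hy⟩ := hb.2.1 y
        refine ⟨.inr y', ?_⟩
        rw [snoc_sumMap_comp_inr a b ρ y, snoc_sumMap_comp_inr a' b' ρ y']
        exact ih ha.1 hy _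
    · rintro (x' | y')
      · obtain ⟨x, hx⟩ := ha.2.2 x'
        refine ⟨.inl x, ?_⟩
        rw [snoc_sumMap_comp_inl a b ρ x, snoc_sumMap_comp_inl a' b' ρ x']
        exact ih hx hb.1 _
      · obtain ⟨y, hy⟩ := hb.2.2 y'
        refine ⟨.inr y, ?_⟩
        rw [snoc_sumMap_comp_inr a b ρ y, snoc_sumMap_comp_inr a' b' ρ y']
        exact ih ha.1 hy _

theorem thd_orderedSum₂_congr [Finite M] [Finite N] [Finite M'] [Finite N'] {d : ℕ}
    (hM : thd d M SM = thd d M' SM') (hN : thd d N SN = thd d N' SN') :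
    thd d (M ⊕ N) (orderedSum₂ SM SN lt) = thd d (M' ⊕ N') (orderedSum₂ SM' SN' lt) := by
  let := orderedSum₂ SM SN lt
  let := orderedSum₂ SM' SN' lt
  have h := EFEquiv.sumMap (lt := lt) (thd_eq_iff_depthEquiv.1 hM).efEquiv
    (thd_eq_iff_depthEquiv.1 hN).efEquiv (Fin.elim0 : Fin 0 → Fin 0 ⊕ Fin 0)
  rw [thd_eq_iff_depthEquiv]
  exact fun φ hφ => by simpa [Subsingleton.elim _ (default : Fin 0 → _)] using h.realize_iff φ hφ

end OrderedSum₂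

section OrderedSum

variable {k : ℕ} {A : Fin k → Type*} (S : ∀ i, L.Structure (A i)) {lt : L.Relations 2}

lemma orderedSum_relMap_of_not_lt {r : ℕ} {R : L.Relations r} (hR : ¬ ∃ _ : r = 2, HEq R lt)
    (x : Fin r → Σ i, A i) :
    (orderedSum A S lt).RelMap R x ↔ ∃ i y, x = Sigma.mk i ∘ y ∧ (S i).RelMap R y := by
  refine (or_iff_left fun ⟨h, hlt, _⟩ => hR ⟨h, hlt⟩).trans ?_
  simp only [funext_iff, Function.comp_apply]

@[simp]
lemma orderedSum_lt_mk_mk {i : Fin k} (a b : A i) :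
    (orderedSum A S lt).RelMap lt ![⟨i, a⟩, ⟨i, b⟩] ↔ (S i).RelMap lt ![a, b] := by
  refine (or_iff_left fun ⟨_, _, h⟩ => lt_irrefl i h).trans ⟨?_, fun h => ⟨i, ![a, b], ?_, h⟩⟩
  · rintro ⟨j, y, hy, h⟩
    obtain ⟨rfl, ha⟩ := Sigma.mk.inj_iff.mp (hy 0)
    obtain ⟨-, hb⟩ := Sigma.mk.inj_iff.mp (hy 1)
    rwa [show ![a, b] = y by ext s; fin_cases s; exacts [eq_of_heq ha, eq_of_heq hb] ]
  · intro s
    fin_cases s <;> rfl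

lemma orderedSum_lt_mk_mk_of_ne {i j : Fin k} (hij : i ≠ j) (a : A i) (b : A j) :
    (orderedSum A S lt).RelMap lt ![⟨i, a⟩, ⟨j, b⟩] ↔ i < j := by
  refine (or_iff_right fun ⟨l, y, hy, _⟩ => hij ?_).trans
    ⟨fun ⟨_, _, h⟩ => h, fun h => ⟨rfl, HEq.rfl, h⟩⟩
  exact (congrArg Sigma.fst (hy 0)).trans (congrArg Sigma.fst (hy 1)).symm

end OrderedSum

lemma thd_eq_of_equiv {M N : Type*} (SM : L.Structure M) (SN : L.Structure N) (e : M ≃ N)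
    (he : ∀ {r} (R : L.Relations r) (x : Fin r → M), SN.RelMap R (e ∘ x) ↔ SM.RelMap R x)
    (d : ℕ) : thd d M SM = thd d N SN := by
  let := SM
  let := SN
  let f : M ≃[L] N := ⟨e, fun f => isEmptyElim f, he⟩
  ext φ
  exact and_congr_right fun _ => StrongHomClass.realize_sentence f φ

lemma thd_orderedSum_fin_one {A : Fin 1 → Type*} (S : ∀ i, L.Structure (A i))
    (lt : L.Relations 2) (d : ℕ) : thd d (Σ i, A i) (orderedSum A S lt) = thd d (A 0) (S 0) := by
  refine (thd_eq_of_equiv (S 0) _ (Equiv.uniqueSigma A).symm (fun {r} R x => ?_) d).symm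
  by_cases hR : ∃ _ : r = 2, HEq R lt
  · obtain ⟨rfl, hR⟩ := hR
    obtain rfl := eq_of_heq hR
    obtain ⟨a, b, rfl⟩ := exists_eq_vec2 x
    rw [comp_vec2]
    exact orderedSum_lt_mk_mk S a b
  · rw [orderedSum_relMap_of_not_lt S hR, Fin.exists_fin_one]
    simp [show ⇑(Equiv.uniqueSigma A).symm ∘ x = Sigma.mk 0 ∘ x from rfl]

def sigmaCastSuccSumLastEquiv {k : ℕ} (A : Fin (k + 1) → Type*) :
    (Σ i : Fin k, A i.castSucc) ⊕ A (Fin.last k) ≃ Σ i, A i where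
  toFun := Sum.elim (fun p => ⟨p.1.castSucc, p.2⟩) (Sigma.mk (Fin.last k))
  invFun p := Fin.lastCases (motive := fun i => A i → _) Sum.inr (fun j a => Sum.inl ⟨j, a⟩) p.1 p.2
  left_inv := by rintro (⟨i, a⟩ | a) <;> simp
  right_inv := by
    rintro ⟨i, a⟩
    induction i using Fin.lastCases <;> simp

@[simp]
lemma sigmaCastSuccSumLastEquiv_inl {k : ℕ} {A : Fin (k + 1) → Type*}
    (p : Σ i : Fin k, A i.castSucc) :
    sigmaCastSuccSumLastEquiv A (Sum.inl p) = ⟨p.1.castSucc, p.2⟩ :=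
  rfl

@[simp]
lemma sigmaCastSuccSumLastEquiv_inr {k : ℕ} {A : Fin (k + 1) → Type*} (a : A (Fin.last k)) :
    sigmaCastSuccSumLastEquiv A (Sum.inr a) = ⟨Fin.last k, a⟩ :=
  rfl

lemma thd_orderedSum_castSucc {k : ℕ} {A : Fin (k + 1) → Type*} (S : ∀ i, L.Structure (A i))
    (lt : L.Relations 2) (d : ℕ) :
    thd d (Σ i, A i) (orderedSum A S lt) =
      thd d _ (orderedSum₂ (orderedSum (fun i => A i.castSucc) (fun i => S i.castSucc) lt)
        (S (Fin.last k)) lt) := by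
  set e := sigmaCastSuccSumLastEquiv A
  refine (thd_eq_of_equiv _ _ e (fun {r} R x => ?_) d).symm
  by_cases hR : ∃ _ : r = 2, HEq R lt
  · obtain ⟨rfl, hR⟩ := hR
    obtain rfl := eq_of_heq hR
    obtain ⟨a, b, rfl⟩ := exists_eq_vec2 x
    rw [comp_vec2]
    rcases a with ⟨i, a⟩ | a <;> rcases b with ⟨j, b⟩ | b
    · obtain rfl | hij := eq_or_ne i j
      · simp [e]
      · simp [e, orderedSum_lt_mk_mk_of_ne, hij]
    all_goals simp [e, orderedSum_lt_mk_mk_of_ne, Fin.castSucc_lt_last, (Fin.castSucc_lt_last _).ne,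
      (Fin.castSucc_lt_last _).ne', (Fin.castSucc_lt_last _).not_gt]
  · have hcs (i : Fin k) (y : Fin r → A i.castSucc) :
        e.symm ∘ Sigma.mk i.castSucc ∘ y = Sum.inl ∘ Sigma.mk i ∘ y :=
      (Equiv.symm_comp_eq _ _ _).2 rfl
    have hlast (y : Fin r → A (Fin.last k)) : e.symm ∘ Sigma.mk (Fin.last k) ∘ y = Sum.inr ∘ y :=
      (Equiv.symm_comp_eq _ _ _).2 rfl
    rw [orderedSum_relMap_of_not_lt S hR, Fin.exists_fin_succ',
      orderedSum₂_relMap_of_not_lt hR]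
    simp only [orderedSum_relMap_of_not_lt _ hR, ← Equiv.eq_symm_comp, hcs, hlast]
    constructor
    · rintro (⟨i, y, rfl, h⟩ | ⟨y, rfl, h⟩)
      · exact Or.inl ⟨_, rfl, i, y, rfl, h⟩
      · exact Or.inr ⟨y, rfl, h⟩
    · rintro (⟨_, rfl, i, y, rfl, h⟩ | ⟨y, rfl, h⟩)
      · exact Or.inl ⟨i, y, rfl, h⟩
      · exact Or.inr ⟨y, rfl, h⟩

lemma thd_orderedSum₂_assoc {M N P : Type*} (SM : L.Structure M) (SN : L.Structure N)
    (SP : L.Structure P) (lt : L.Relations 2) (d : ℕ) :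
    thd d _ (orderedSum₂ (orderedSum₂ SM SN lt) SP lt) =
      thd d _ (orderedSum₂ SM (orderedSum₂ SN SP lt) lt) := by
  refine thd_eq_of_equiv _ _ (Equiv.sumAssoc M N P) (fun {r} R x => ?_) d
  by_cases hR : ∃ _ : r = 2, HEq R lt
  · obtain ⟨rfl, hR⟩ := hR
    obtain rfl := eq_of_heq hR
    obtain ⟨a, b, rfl⟩ := exists_eq_vec2 x
    rw [comp_vec2]
    rcases a with (a | a) | a <;> rcases b with (b | b) | b <;> simp
  · simp only [orderedSum₂_relMap_of_not_lt hR, ← Equiv.eq_symm_comp]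
    constructor
    · rintro (⟨y, rfl, h⟩ | ⟨w, rfl, ⟨v, rfl, h⟩ | ⟨p, rfl, h⟩⟩)
      · exact Or.inl ⟨_, rfl, Or.inl ⟨y, rfl, h⟩⟩
      · exact Or.inl ⟨_, rfl, Or.inr ⟨v, rfl, h⟩⟩
      · exact Or.inr ⟨p, rfl, h⟩
    · rintro (⟨_, rfl, ⟨u, rfl, h⟩ | ⟨v, rfl, h⟩⟩ | ⟨p, rfl, h⟩)
      · exact Or.inl ⟨u, rfl, h⟩
      · exact Or.inr ⟨_, rfl, Or.inl ⟨v, rfl, h⟩⟩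
      · exact Or.inr ⟨_, rfl, Or.inr ⟨p, rfl, h⟩⟩

/-- The union over all finite representatives of `T` and `T'`; by `thd_orderedSum₂_congr` they
all contribute the same theory. -/
def sumTheory (lt : L.Relations 2) (d : ℕ) (T T' : Set L.Sentence) : Set L.Sentence :=
  {φ | ∃ (M N : Type) (SM : L.Structure M) (SN : L.Structure N), Finite M ∧ Finite N ∧
    thd d M SM = T ∧ thd d N SN = T' ∧ φ ∈ thd d (M ⊕ N) (orderedSum₂ SM SN lt)}

lemma sumTheory_thd {M N : Type} [Finite M] [Finite N] (SM : L.Structure M) (SN : L.Structure N)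
    (lt : L.Relations 2) (d : ℕ) :
    sumTheory lt d (thd d M SM) (thd d N SN) = thd d (M ⊕ N) (orderedSum₂ SM SN lt) := by
  ext φ
  constructor
  · rintro ⟨M', N', SM', SN', _, _, hM, hN, hφ⟩
    rwa [← thd_orderedSum₂_congr hM hN]
  · exact fun hφ => ⟨M, N, SM, SN, ‹_›, ‹_›, rfl, rfl, hφ⟩

theorem thd_orderedSum_eq_foldl (lt : L.Relations 2) (d : ℕ) : ∀ (k : ℕ) (A : Fin (k + 1) → Type)
    (S : ∀ i, L.Structure (A i)) [∀ i, Finite (A i)],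
    thd d (Σ i, A i) (orderedSum A S lt) =
      List.foldl (sumTheory lt d) (thd d (A 0) (S 0))
        (List.ofFn fun i : Fin k => thd d (A i.succ) (S i.succ))
  | 0, A, S, _ => by simpa using thd_orderedSum_fin_one S lt d
  | k + 1, A, S, _ => by
    rw [thd_orderedSum_castSucc, ← sumTheory_thd,
      thd_orderedSum_eq_foldl lt d k (fun i => A i.castSucc) (fun i => S i.castSucc),
      List.ofFn_succ', List.concat_eq_append, List.foldl_append]
    rfl

end FefermanVaught

open FefermanVaught in
theorem stmt_8_general {L : Language} [L.IsRelational]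
    (lt : L.Relations 2) (d : ℕ) :
    ∃ op : Set L.Sentence → Set L.Sentence → Set L.Sentence,
      (∀ T₁ ∈ theoriesD lt d, ∀ T₂ ∈ theoriesD lt d, ∀ T₃ ∈ theoriesD lt d,
        op (op T₁ T₂) T₃ = op T₁ (op T₂ T₃)) ∧
      (∀ (k : ℕ) (A : Fin (k + 1) → Type) (S : ∀ i, L.Structure (A i)),
        (∀ i, Finite (A i)) →
        (∀ i, IsLinearOrder (A i) (fun a b => (S i).RelMap lt ![a, b])) →
        thd d (Σ i, A i) (orderedSum A S lt) =
          List.foldl op (thd d (A 0) (S 0))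
            (List.ofFn fun i : Fin k => thd d (A i.succ) (S i.succ))) := by
  refine ⟨sumTheory lt d, ?_, fun k A S _ _ => thd_orderedSum_eq_foldl lt d k A S⟩
  rintro _ ⟨M₁, S₁, _, -, rfl⟩ _ ⟨M₂, S₂, _, -, rfl⟩ _ ⟨M₃, S₃, _, -, rfl⟩
  rw [sumTheory_thd, sumTheory_thd, sumTheory_thd, sumTheory_thd, thd_orderedSum₂_assoc]

theorem stmt_8 {L : Language} [L.IsRelational] [∀ n, Finite (L.Relations n)]
    (lt : L.Relations 2) (d : ℕ) :
    ∃ op : Set L.Sentence → Set L.Sentence → Set L.Sentence,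
      (∀ T₁ ∈ theoriesD lt d, ∀ T₂ ∈ theoriesD lt d, ∀ T₃ ∈ theoriesD lt d,
        op (op T₁ T₂) T₃ = op T₁ (op T₂ T₃)) ∧
      (∀ (k : ℕ) (A : Fin (k + 1) → Type) (S : ∀ i, L.Structure (A i)),
        (∀ i, Finite (A i)) →
        (∀ i, IsLinearOrder (A i) (fun a b => (S i).RelMap lt ![a, b])) →
        thd d (Σ i, A i) (orderedSum A S lt) =
          List.foldl op (thd d (A 0) (S 0))
            (List.ofFn fun i : Fin k => thd d (A i.succ) (S i.succ))) :=
  stmt_8_general lt d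
end

section
/- Let d ∈ ℕ and let c be the number of possible complete depth-d theories of finite τ-structures (τ finite relational with <, linearly ordered structures). Suppose k₀ → (3^{d+8})²_{c²} (Ramsey). Let M_i^{yes}, M_i^{no} (i < r) be finite linearly ordered τ-structures and J ⊆ {0,…,r−1} with |J| = k₀. Then there exist a set Q ⊆ {0,…,r−1} and an element s ∈ J with s ∉ Q such that the ordered sums Σ_{i<r} M_i^{if(i ∈ Q)} and Σ_{i<r} M_i^{if(i ∈ Q ∪ {s})} have the same depth-d theory, where M_i^{if(i∈A)} denotes M_i^{yes} if i ∈ A and M_i^{no} otherwise. -/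
open FirstOrder FirstOrder.Language

namespace SP9

open FirstOrder.Language

set_option linter.unusedSectionVars false

variable {L : Language} [L.IsRelational]

lemma term_eq_var {n : ℕ} (t : L.Term (Empty ⊕ Fin n)) :
    ∃ i : Fin n, t = Term.var (Sum.inr i) := by
  cases t with
  | var v =>
    cases v with
    | inl e => exact e.elim
    | inr i => exact ⟨i, rfl⟩
  | func f _ => exact isEmptyElim f

/-- conjunction -/
def bfAnd {α : Type*} {n : ℕ} (φ ψ : L.BoundedFormula α n) : L.BoundedFormula α n :=
  (φ.imp (ψ.imp .falsum)).imp .falsum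

def bfNot {α : Type*} {n : ℕ} (φ : L.BoundedFormula α n) : L.BoundedFormula α n :=
  φ.imp .falsum

def bfEx {α : Type*} {n : ℕ} (φ : L.BoundedFormula α (n + 1)) : L.BoundedFormula α n :=
  bfNot (.all (bfNot φ))

@[simp] lemma qdepth_falsum {α : Type*} {n : ℕ} :
    qdepth (.falsum : L.BoundedFormula α n) = 0 := rfl

@[simp] lemma qdepth_imp {α : Type*} {n : ℕ} (φ ψ : L.BoundedFormula α n) :
    qdepth (φ.imp ψ) = max (qdepth φ) (qdepth ψ) := rfl

@[simp] lemma qdepth_all {α : Type*} {n : ℕ} (φ : L.BoundedFormula α (n+1)) :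
    qdepth (.all φ) = qdepth φ + 1 := rfl

@[simp] lemma qdepth_bfAnd {α : Type*} {n : ℕ} (φ ψ : L.BoundedFormula α n) :
    qdepth (bfAnd φ ψ) = max (qdepth φ) (qdepth ψ) := by
  simp [bfAnd]

@[simp] lemma qdepth_bfNot {α : Type*} {n : ℕ} (φ : L.BoundedFormula α n) :
    qdepth (bfNot φ) = qdepth φ := by simp [bfNot]

@[simp] lemma qdepth_bfEx {α : Type*} {n : ℕ} (φ : L.BoundedFormula α (n+1)) :
    qdepth (bfEx φ) = qdepth φ + 1 := by simp [bfEx]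

section Realize

variable {M : Type*} [L.Structure M] {α : Type*}

lemma realize_falsum' {n : ℕ} {v : α → M} {xs : Fin n → M} :
    (BoundedFormula.falsum : L.BoundedFormula α n).Realize v xs ↔ False := Iff.rfl

lemma realize_equal' {n : ℕ} (t₁ t₂ : L.Term (α ⊕ Fin n)) (v : α → M) (xs : Fin n → M) :
    (BoundedFormula.equal t₁ t₂).Realize v xs ↔
      t₁.realize (Sum.elim v xs) = t₂.realize (Sum.elim v xs) := Iff.rfl

lemma realize_rel' {n m : ℕ} (R : L.Relations m) (ts : Fin m → L.Term (α ⊕ Fin n))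
    (v : α → M) (xs : Fin n → M) :
    (BoundedFormula.rel R ts).Realize v xs ↔
      Structure.RelMap R (fun i => (ts i).realize (Sum.elim v xs)) := Iff.rfl

lemma realize_imp' {n : ℕ} (φ ψ : L.BoundedFormula α n) (v : α → M) (xs : Fin n → M) :
    ((φ.imp ψ)).Realize v xs ↔ (φ.Realize v xs → ψ.Realize v xs) := Iff.rfl

lemma realize_all' {n : ℕ} (φ : L.BoundedFormula α (n+1)) (v : α → M) (xs : Fin n → M) :
    ((BoundedFormula.all φ)).Realize v xs ↔ ∀ a, φ.Realize v (Fin.snoc xs a) := Iff.rfl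

@[simp] lemma realize_bfAnd {n : ℕ} (φ ψ : L.BoundedFormula α n) (v : α → M) (xs : Fin n → M) :
    (bfAnd φ ψ).Realize v xs ↔ (φ.Realize v xs ∧ ψ.Realize v xs) := by
  simp only [bfAnd, realize_imp', realize_falsum']
  tauto

@[simp] lemma realize_bfNot {n : ℕ} (φ : L.BoundedFormula α n) (v : α → M) (xs : Fin n → M) :
    (bfNot φ).Realize v xs ↔ ¬ φ.Realize v xs := by
  simp only [bfNot, realize_imp', realize_falsum']

@[simp] lemma realize_bfEx {n : ℕ} (φ : L.BoundedFormula α (n+1)) (v : α → M) (xs : Fin n → M) :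
    (bfEx φ).Realize v xs ↔ ∃ a, φ.Realize v (Fin.snoc xs a) := by
  simp only [bfEx, realize_bfNot, realize_all', not_forall, not_not]

/-- finite conjunction -/
def conjList {n : ℕ} : List (L.BoundedFormula α n) → L.BoundedFormula α n
  | [] => bfNot .falsum
  | φ :: l => bfAnd φ (conjList l)

lemma qdepth_conjList {n j : ℕ} (l : List (L.BoundedFormula α n))
    (h : ∀ φ ∈ l, qdepth φ ≤ j) : qdepth (conjList l) ≤ j := by
  induction l with
  | nil => simp [conjList]
  | cons φ l ih =>
    simp only [conjList, qdepth_bfAnd, max_le_iff]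
    exact ⟨h φ (by simp), ih fun ψ hψ => h ψ (by simp [hψ])⟩

lemma realize_conjList {n : ℕ} (l : List (L.BoundedFormula α n)) (v : α → M) (xs : Fin n → M) :
    (conjList l).Realize v xs ↔ ∀ φ ∈ l, φ.Realize v xs := by
  induction l with
  | nil => simp [conjList, realize_falsum']
  | cons φ l ih => simp [conjList, ih]

end Realize

end SP9

namespace SP9

variable {L : Language} [L.IsRelational]

/-- depth-`j` elementary equivalence with parameters, structures explicit. -/
def Eqv {M N : Type*} (SM : L.Structure M) (SN : L.Structure N) (j : ℕ) (n : ℕ)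
    (xs : Fin n → M) (ys : Fin n → N) : Prop :=
  ∀ φ : L.BoundedFormula Empty n, qdepth φ ≤ j →
    (@BoundedFormula.Realize L M SM Empty n φ (fun e => e.elim) xs ↔
     @BoundedFormula.Realize L N SN Empty n φ (fun e => e.elim) ys)

lemma Eqv.mono {M N : Type*} {SM : L.Structure M} {SN : L.Structure N} {j j' n : ℕ}
    {xs : Fin n → M} {ys : Fin n → N} (h : Eqv SM SN j n xs ys) (hj : j' ≤ j) :
    Eqv SM SN j' n xs ys :=
  fun φ hφ => h φ (hφ.trans hj)

lemma Eqv.symm {M N : Type*} {SM : L.Structure M} {SN : L.Structure N} {j n : ℕ}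
    {xs : Fin n → M} {ys : Fin n → N} (h : Eqv SM SN j n xs ys) :
    Eqv SN SM j n ys xs :=
  fun φ hφ => (h φ hφ).symm

lemma eqv_forth {M N : Type*} {SM : L.Structure M} {SN : L.Structure N} [Finite N]
    {j n : ℕ} {xs : Fin n → M} {ys : Fin n → N}
    (h : Eqv SM SN (j + 1) n xs ys) (a : M) :
    ∃ b : N, Eqv SM SN j (n + 1) (Fin.snoc xs a) (Fin.snoc ys b) := by
  by_contra hc
  push_neg at hc
  have key : ∀ b : N, ∃ φ : L.BoundedFormula Empty (n + 1), qdepth φ ≤ j ∧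
      @BoundedFormula.Realize L M SM Empty (n+1) φ (fun e => e.elim) (Fin.snoc xs a) ∧
      ¬ @BoundedFormula.Realize L N SN Empty (n+1) φ (fun e => e.elim) (Fin.snoc ys b) := by
    intro b
    have hb := hc b
    unfold Eqv at hb
    push_neg at hb
    obtain ⟨φ, hφd, hφ⟩ := hb
    rcases hφ with ⟨hM, hN⟩ | ⟨hM, hN⟩
    · exact ⟨φ, hφd, hM, hN⟩
    · exact ⟨bfNot φ, by simpa using hφd, by rw [realize_bfNot]; exact hM,
        by rw [realize_bfNot, not_not]; exact hN⟩
  choose f hf1 hf2 hf3 using key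
  haveI := Fintype.ofFinite N
  set l : List N := Finset.univ.toList with hl
  set Φ : L.BoundedFormula Empty n := bfEx (conjList (l.map f)) with hΦ
  have hΦd : qdepth Φ ≤ j + 1 := by
    rw [hΦ, qdepth_bfEx]
    have := qdepth_conjList (l.map f) (by
      intro ψ hψ
      rw [List.mem_map] at hψ
      obtain ⟨b, _, rfl⟩ := hψ
      exact hf1 b)
    omega
  have hM : @BoundedFormula.Realize L M SM Empty n Φ (fun e => e.elim) xs := by
    rw [hΦ, realize_bfEx]
    refine ⟨a, ?_⟩
    rw [realize_conjList]
    intro ψ hψ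
    rw [List.mem_map] at hψ
    obtain ⟨b, _, rfl⟩ := hψ
    exact hf2 b
  have hN := (h Φ hΦd).mp hM
  rw [hΦ, realize_bfEx] at hN
  obtain ⟨b, hb⟩ := hN
  rw [realize_conjList] at hb
  exact hf3 b (hb (f b) (List.mem_map.mpr ⟨b, by simp [hl], rfl⟩))

/-- generic EF soundness lemma -/
lemma ef_sound {M N : Type*} (SM : L.Structure M) (SN : L.Structure N)
    (E : ℕ → ∀ n : ℕ, (Fin n → M) → (Fin n → N) → Prop)
    (hatom_eq : ∀ k n xs ys, E k n xs ys → ∀ q q' : Fin n, xs q = xs q' ↔ ys q = ys q')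
    (hatom_rel : ∀ k n xs ys, E k n xs ys → ∀ (m : ℕ) (R : L.Relations m) (σ : Fin m → Fin n),
      (@Structure.RelMap L M SM m R (xs ∘ σ) ↔ @Structure.RelMap L N SN m R (ys ∘ σ)))
    (hforth : ∀ k n xs ys, E (k+1) n xs ys → ∀ a : M, ∃ b : N,
      E k (n+1) (Fin.snoc xs a) (Fin.snoc ys b))
    (hback : ∀ k n xs ys, E (k+1) n xs ys → ∀ b : N, ∃ a : M,
      E k (n+1) (Fin.snoc xs a) (Fin.snoc ys b)) :
    ∀ (n : ℕ) (φ : L.BoundedFormula Empty n) (k : ℕ) (xs : Fin n → M) (ys : Fin n → N),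
      qdepth φ ≤ k → E k n xs ys →
      (@BoundedFormula.Realize L M SM Empty n φ (fun e => e.elim) xs ↔
       @BoundedFormula.Realize L N SN Empty n φ (fun e => e.elim) ys) := by
  intro n φ
  induction φ with
  | falsum => intro k xs ys _ _; exact Iff.rfl
  | @equal n t₁ t₂ =>
    intro k xs ys _ hE
    obtain ⟨i₁, rfl⟩ := term_eq_var t₁
    obtain ⟨i₂, rfl⟩ := term_eq_var t₂
    rw [realize_equal', realize_equal']
    exact hatom_eq k n xs ys hE i₁ i₂
  | @rel n m R ts =>
    intro k xs ys _ hE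
    choose σ hσ using fun i => term_eq_var (ts i)
    rw [realize_rel', realize_rel']
    have h1 : (fun i => (ts i).realize (Sum.elim (fun e => e.elim) xs)) = xs ∘ σ := by
      funext i; rw [hσ i]; rfl
    have h2 : (fun i => (ts i).realize (Sum.elim (fun e => e.elim) ys)) = ys ∘ σ := by
      funext i; rw [hσ i]; rfl
    rw [h1, h2]
    exact hatom_rel k n xs ys hE m R σ
  | @imp n φ ψ ihφ ihψ =>
    intro k xs ys hd hE
    rw [qdepth_imp, max_le_iff] at hd
    rw [realize_imp', realize_imp']
    rw [ihφ k xs ys hd.1 hE, ihψ k xs ys hd.2 hE]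
  | @all n φ ih =>
    intro k xs ys hd hE
    rw [qdepth_all] at hd
    obtain ⟨k', rfl⟩ : ∃ k', k = k' + 1 := ⟨k - 1, by omega⟩
    have hφd : qdepth φ ≤ k' := by omega
    rw [realize_all', realize_all']
    constructor
    · intro hM b
      obtain ⟨a, hE'⟩ := hback k' n xs ys hE b
      exact (ih k' _ _ hφd hE').mp (hM a)
    · intro hN a
      obtain ⟨b, hE'⟩ := hforth k' n xs ys hE a
      exact (ih k' _ _ hφd hE').mpr (hN b)

end SP9

namespace SP9

set_option linter.unusedSectionVars false

variable {L : Language} [L.IsRelational] {r : ℕ}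

def SegC (A : Fin r → Type*) (lo hi : ℕ) : Type _ :=
  {x : Σ i, A i // lo ≤ x.1.val ∧ x.1.val < hi}

def segRel (A : Fin r → Type*) (S : ∀ i, L.Structure (A i)) (lt : L.Relations 2)
    (lo hi : ℕ) (n : ℕ) (R : L.Relations n) (x : Fin n → SegC A lo hi) : Prop :=
  (∃ (i : Fin r) (y : Fin n → A i), (lo ≤ i.val ∧ i.val < hi) ∧
      (∀ j, (x j).val = ⟨i, y j⟩) ∧ (S i).RelMap R y) ∨
  (∃ h : n = 2, HEq R lt ∧
    (x (Fin.cast h.symm 0)).val.1 < (x (Fin.cast h.symm 1)).val.1)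

def mkSeg (A : Fin r → Type*) (lo hi : ℕ)
    (F : ∀ n : ℕ, L.Relations n → (Fin n → SegC A lo hi) → Prop) :
    L.Structure (SegC A lo hi) where
  funMap := fun f _ => isEmptyElim f
  RelMap := fun {n} R x => F n R x

def seg (A : Fin r → Type*) (S : ∀ i, L.Structure (A i)) (lt : L.Relations 2)
    (lo hi : ℕ) : L.Structure (SegC A lo hi) :=
  mkSeg A lo hi (segRel A S lt lo hi)

lemma seg_relMap (A : Fin r → Type*) (S : ∀ i, L.Structure (A i)) (lt : L.Relations 2)
    (lo hi : ℕ) {n : ℕ} (R : L.Relations n) (x : Fin n → SegC A lo hi) :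
    (seg A S lt lo hi).RelMap R x ↔ segRel A S lt lo hi n R x := Iff.rfl

lemma seg_congr (A : Fin r → Type*) (S S' : ∀ i, L.Structure (A i)) (lt : L.Relations 2)
    (lo hi : ℕ) (h : ∀ i : Fin r, lo ≤ i.val → i.val < hi → S i = S' i) :
    seg A S lt lo hi = seg A S' lt lo hi := by
  unfold seg
  congr 1
  funext n R x
  unfold segRel
  have : ∀ (i : Fin r) (y : Fin n → A i), (lo ≤ i.val ∧ i.val < hi) →
      ((S i).RelMap R y ↔ (S' i).RelMap R y) := by
    intro i y hi'
    rw [h i hi'.1 hi'.2]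
  apply propext
  constructor
  · rintro (⟨i, y, hiv, hxy, hR⟩ | hlt)
    · exact Or.inl ⟨i, y, hiv, hxy, (this i y hiv).mp hR⟩
    · exact Or.inr hlt
  · rintro (⟨i, y, hiv, hxy, hR⟩ | hlt)
    · exact Or.inl ⟨i, y, hiv, hxy, (this i y hiv).mpr hR⟩
    · exact Or.inr hlt

lemma orderedSum_relMap {k : ℕ} (A : Fin k → Type*) (S : ∀ i, L.Structure (A i))
    (lt : L.Relations 2) {n : ℕ} (R : L.Relations n) (x : Fin n → Σ i, A i) :
    (orderedSum A S lt).RelMap R x ↔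
      ((∃ (i : Fin k) (y : Fin n → A i), (∀ j, x j = ⟨i, y j⟩) ∧ (S i).RelMap R y) ∨
       (∃ h : n = 2, HEq R lt ∧
         (x (Fin.cast h.symm 0)).1 < (x (Fin.cast h.symm 1)).1)) := Iff.rfl

/-- transfer for tuples living in a segment -/
lemma relMap_global_seg (A : Fin r → Type*) (S : ∀ i, L.Structure (A i))
    (lt : L.Relations 2) (lo hi : ℕ) {m : ℕ} (R : L.Relations (m + 1))
    (x : Fin (m + 1) → Σ i, A i) (hx : ∀ k, lo ≤ (x k).1.val ∧ (x k).1.val < hi) :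
    (orderedSum A S lt).RelMap R x ↔
      (seg A S lt lo hi).RelMap R (fun k => ⟨x k, hx k⟩) := by
  rw [orderedSum_relMap]
  change _ ↔ segRel A S lt lo hi (m + 1) R _
  unfold segRel
  constructor
  · rintro (⟨i, y, hxy, hR⟩ | hlt)
    · refine Or.inl ⟨i, y, ?_, fun j => hxy j, hR⟩
      have h0 : (x 0).1 = i := by rw [hxy 0]
      rw [← h0]; exact hx 0
    · exact Or.inr hlt
  · rintro (⟨i, y, _, hxy, hR⟩ | hlt)
    · exact Or.inl ⟨i, y, fun j => hxy j, hR⟩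
    · exact Or.inr hlt

end SP9

namespace SP9

set_option linter.unusedSectionVars false

variable {L : Language} [L.IsRelational] {r : ℕ}

lemma seg_lt_mk (A : Fin r → Type*) (S : ∀ i, L.Structure (A i)) (lt : L.Relations 2)
    (lo hi : ℕ) (ia ib : Fin r) (xa : A ia) (xb : A ib)
    (pfa : lo ≤ (Sigma.mk ia xa).1.val ∧ (Sigma.mk ia xa).1.val < hi)
    (pfb : lo ≤ (Sigma.mk ib xb).1.val ∧ (Sigma.mk ib xb).1.val < hi) :
    (seg A S lt lo hi).RelMap lt ![⟨⟨ia, xa⟩, pfa⟩, ⟨⟨ib, xb⟩, pfb⟩] ↔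
      ((∃ h : ia = ib, (S ib).RelMap lt ![h ▸ xa, xb]) ∨ ia < ib) := by
  rw [seg_relMap]
  unfold segRel
  constructor
  · rintro (⟨i, y, hiv, hxy, hR⟩ | ⟨h2, hheq, hlt⟩)
    · have h0 := hxy 0
      have h1 := hxy 1
      change Sigma.mk ia xa = _ at h0
      change Sigma.mk ib xb = _ at h1
      injection h0 with h0a h0b
      subst h0a
      have h0b' : y 0 = xa := (eq_of_heq h0b).symm
      injection h1 with h1a h1b
      subst h1a
      have h1b' : y 1 = xb := (eq_of_heq h1b).symm
      refine Or.inl ⟨rfl, ?_⟩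
      have : y = ![xa, xb] := by
        funext j
        fin_cases j <;> simp [h0b', h1b']
      rw [← this]
      exact hR
    · refine Or.inr ?_
      have h0 : (Fin.cast h2.symm 0) = (0 : Fin 2) := rfl
      have h1 : (Fin.cast h2.symm 1) = (1 : Fin 2) := rfl
      rw [h0, h1] at hlt
      simpa using hlt
  · rintro (⟨rfl, hR⟩ | hlt)
    · refine Or.inl ⟨ia, ![xa, xb], pfa, ?_, hR⟩
      intro j
      fin_cases j <;> rfl
    · exact Or.inr ⟨rfl, HEq.rfl, by simpa using hlt⟩

lemma seg_linear (A : Fin r → Type*) (S : ∀ i, L.Structure (A i)) (lt : L.Relations 2)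
    (lo hi : ℕ) (hS : ∀ i, IsLinearOrder (A i) (fun a b => (S i).RelMap lt ![a, b])) :
    IsLinearOrder (SegC A lo hi)
      (fun a b => (seg A S lt lo hi).RelMap lt ![a, b]) := by
  haveI := fun i => (hS i).toIsPartialOrder.toIsPreorder.toRefl
  haveI := fun i => (hS i).toIsPartialOrder.toIsPreorder.toIsTrans
  haveI := fun i => (hS i).toIsPartialOrder.toAntisymm
  haveI := fun i => (hS i).toTotal
  have hrefl : ∀ a : SegC A lo hi, (seg A S lt lo hi).RelMap lt ![a, a] := by
    rintro ⟨⟨ia, xa⟩, pfa⟩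
    rw [seg_lt_mk]
    exact Or.inl ⟨rfl, refl_of (fun a b => (S ia).RelMap lt ![a, b]) xa⟩
  have htrans : ∀ a b c : SegC A lo hi, (seg A S lt lo hi).RelMap lt ![a, b] →
      (seg A S lt lo hi).RelMap lt ![b, c] → (seg A S lt lo hi).RelMap lt ![a, c] := by
    rintro ⟨⟨ia, xa⟩, pfa⟩ ⟨⟨ib, xb⟩, pfb⟩ ⟨⟨ic, xc⟩, pfc⟩ hab hbc
    rw [seg_lt_mk] at hab hbc ⊢
    rcases hab with ⟨rfl, h1⟩ | h1 <;> rcases hbc with ⟨rfl, h2⟩ | h2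
    · exact Or.inl ⟨rfl, trans_of (fun a b => (S ia).RelMap lt ![a, b]) h1 h2⟩
    · exact Or.inr h2
    · exact Or.inr h1
    · exact Or.inr (lt_trans h1 h2)
  have hanti : ∀ a b : SegC A lo hi, (seg A S lt lo hi).RelMap lt ![a, b] →
      (seg A S lt lo hi).RelMap lt ![b, a] → a = b := by
    rintro ⟨⟨ia, xa⟩, pfa⟩ ⟨⟨ib, xb⟩, pfb⟩ hab hba
    rw [seg_lt_mk] at hab hba
    rcases hab with ⟨rfl, h1⟩ | h1 <;> rcases hba with ⟨h2e, h2⟩ | h2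
    · have : xa = xb := antisymm_of (fun a b => (S ia).RelMap lt ![a, b]) h1 h2
      subst this
      rfl
    · exact absurd h2 (lt_irrefl ia)
    · rw [h2e] at h1
      exact absurd h1 (lt_irrefl ia)
    · exact absurd (lt_trans h1 h2) (lt_irrefl ia)
  have htot : ∀ a b : SegC A lo hi, (seg A S lt lo hi).RelMap lt ![a, b] ∨
      (seg A S lt lo hi).RelMap lt ![b, a] := by
    rintro ⟨⟨ia, xa⟩, pfa⟩ ⟨⟨ib, xb⟩, pfb⟩
    rcases lt_trichotomy ia ib with h | rfl | h
    · exact Or.inl (by rw [seg_lt_mk]; exact Or.inr h)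
    · rcases total_of (fun a b => (S ia).RelMap lt ![a, b]) xa xb with h | h
      · exact Or.inl (by rw [seg_lt_mk]; exact Or.inl ⟨rfl, h⟩)
      · exact Or.inr (by rw [seg_lt_mk]; exact Or.inl ⟨rfl, h⟩)
    · exact Or.inr (by rw [seg_lt_mk]; exact Or.inr h)
  exact { refl := hrefl, trans := htrans, antisymm := hanti, total := htot }

lemma finite_SegC (A : Fin r → Type*) (hfinA : ∀ i, Finite (A i)) (lo hi : ℕ) :
    Finite (SegC A lo hi) := by
  haveI := hfinA
  unfold SegC
  infer_instance

lemma thd_seg_mem (A : Fin r → Type) (S : ∀ i, L.Structure (A i)) (lt : L.Relations 2)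
    (lo hi d : ℕ) (hfinA : ∀ i, Finite (A i))
    (hS : ∀ i, IsLinearOrder (A i) (fun a b => (S i).RelMap lt ![a, b])) :
    thd d (SegC A lo hi) (seg A S lt lo hi) ∈ theoriesD lt d :=
  ⟨SegC A lo hi, seg A S lt lo hi, finite_SegC A hfinA lo hi,
    seg_linear A S lt lo hi hS, rfl⟩

lemma sentenceRealize_iff {α : Type*} (S : L.Structure α) (φ : L.Sentence) :
    @Sentence.Realize L α S φ ↔
      @BoundedFormula.Realize L α S Empty 0 φ (fun e => e.elim) (fun q => q.elim0) := by
  unfold Sentence.Realize Formula.Realize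
  have h1 : (default : Empty → α) = fun e => e.elim := funext fun e => e.elim
  have h2 : (default : Fin 0 → α) = fun q => q.elim0 := funext fun q => q.elim0
  rw [h1, h2]

lemma thd_eq_eqv {α β : Type*} (S1 : L.Structure α) (S2 : L.Structure β) (d : ℕ)
    (h : thd d α S1 = thd d β S2) :
    Eqv S1 S2 d 0 (fun q => q.elim0) (fun q => q.elim0) := by
  intro φ hφ
  have := Set.ext_iff.mp h φ
  unfold thd at this
  simp only [Set.mem_setOf_eq] at this
  rw [← sentenceRealize_iff, ← sentenceRealize_iff]
  constructor
  · intro hr; exact ((this.mp ⟨hφ, hr⟩).2)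
  · intro hr; exact ((this.mpr ⟨hφ, hr⟩).2)

end SP9

namespace SP9

set_option linter.unusedSectionVars false
set_option maxHeartbeats 1000000

def gapOK (j g g' : ℕ) : Prop := g = g' ∨ (2 ^ j ≤ g + 1 ∧ 2 ^ j ≤ g' + 1)

lemma gapOK_mono {j j' g g' : ℕ} (h : gapOK j g g') (hj : j' ≤ j) : gapOK j' g g' := by
  rcases h with h | ⟨h1, h2⟩
  · exact Or.inl h
  · exact Or.inr ⟨le_trans (Nat.pow_le_pow_right (by norm_num) hj) h1,
      le_trans (Nat.pow_le_pow_right (by norm_num) hj) h2⟩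

lemma gapOK_symm {j g g' : ℕ} (h : gapOK j g g') : gapOK j g' g := by
  rcases h with h | ⟨h1, h2⟩
  · exact Or.inl h.symm
  · exact Or.inr ⟨h2, h1⟩

lemma gap_split {j g g' x : ℕ} (h : gapOK (j+1) g g') (hx : x < g) :
    ∃ x' < g', gapOK j x x' ∧ gapOK j (g - x - 1) (g' - x' - 1) := by
  have h2pos : 1 ≤ 2 ^ j := Nat.one_le_two_pow
  have hpow : 2 ^ (j + 1) = 2 ^ j * 2 := pow_succ 2 j
  rcases h with rfl | ⟨hg, hg'⟩
  · exact ⟨x, hx, Or.inl rfl, Or.inl rfl⟩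
  · rw [hpow] at hg hg'
    by_cases hc1 : x + 1 < 2 ^ j
    · exact ⟨x, by omega, Or.inl rfl, Or.inr ⟨by omega, by omega⟩⟩
    · by_cases hc2 : g - x < 2 ^ j
      · exact ⟨g' - (g - x), by omega, Or.inr ⟨by omega, by omega⟩, Or.inl (by omega)⟩
      · exact ⟨2 ^ j - 1, by omega, Or.inr ⟨by omega, by omega⟩, Or.inr ⟨by omega, by omega⟩⟩

lemma smono_le (U : ℕ → ℕ) (t : ℕ) (hU : ∀ w ≤ t, U w < U (w+1)) :
    ∀ k w, w + k ≤ t + 1 → U w + k ≤ U (w + k) := by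
  intro k
  induction k with
  | zero => intro w _; simp
  | succ k ih =>
    intro w hw
    have h1 := ih w (by omega)
    have h2 := hU (w + k) (by omega)
    calc U w + (k + 1) = (U w + k) + 1 := by omega
    _ ≤ U (w + k) + 1 := by omega
    _ ≤ U (w + k + 1) := by omega

lemma cuts_mono (c : ℕ → ℕ) (K : ℕ) (hc : ∀ u < K, c u < c (u+1)) :
    ∀ u u', u ≤ u' → u' ≤ K → c u ≤ c u' := by
  have aux : ∀ k u, u + k ≤ K → c u ≤ c (u + k) := by
    intro k
    induction k with
    | zero => intro u _; simp
    | succ k ih =>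
      intro u hu
      have h1 := ih u (by omega)
      have h2 := hc (u + k) (by omega)
      have : u + (k + 1) = (u + k) + 1 := by omega
      rw [this]
      omega
  intro u u' h hle
  have := aux (u' - u) u (by omega)
  have h2 : u + (u' - u) = u' := by omega
  rw [h2] at this
  exact this

lemma cover (c : ℕ → ℕ) (K : ℕ) (hc : ∀ u < K, c u < c (u+1)) (x : ℕ)
    (hx1 : c 0 ≤ x) (hx2 : x < c K) : ∃ u < K, c u ≤ x ∧ x < c (u+1) := by
  induction K with
  | zero => omega
  | succ n ih =>
    by_cases h : c n ≤ x
    · exact ⟨n, by omega, h, hx2⟩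
    · obtain ⟨u, hu, h1, h2⟩ := ih (fun u hu => hc u (by omega)) (by omega)
      exact ⟨u, by omega, h1, h2⟩


lemma find_between (U : ℕ → ℕ) (t x : ℕ) (h0 : U 0 ≤ x) (ht : x < U (t+1)) :
    ∃ w ≤ t, U w ≤ x ∧ x < U (w+1) := by
  induction t with
  | zero => exact ⟨0, le_refl 0, h0, ht⟩
  | succ n ih =>
    by_cases h : U (n+1) ≤ x
    · exact ⟨n+1, le_refl _, h, ht⟩
    · obtain ⟨w, hw, h1, h2⟩ := ih (by omega)
      exact ⟨w, by omega, h1, h2⟩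

section Main

variable {L : Language} [L.IsRelational] {r : ℕ} (A : Fin r → Type)
  (SL SR : ∀ i, L.Structure (A i)) (lt : L.Relations 2)
  (d lo hi K K' : ℕ) (cL cR : ℕ → ℕ)

def BlockEqv (j : ℕ) {n : ℕ} (xs ys : Fin n → Σ i, A i) (W : Fin n → Option ℕ)
    (w u v : ℕ) : Prop :=
  ∃ (len : ℕ) (σ : Fin len → Fin n) (xs' : Fin len → SegC A (cL u) (cL (u+1)))
    (ys' : Fin len → SegC A (cR v) (cR (v+1))),
    (∀ i, (xs' i).val = xs (σ i)) ∧ (∀ i, (ys' i).val = ys (σ i)) ∧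
    (∀ q, W q = some w → ∃ i, σ i = q) ∧
    Eqv (seg A SL lt (cL u) (cL (u+1))) (seg A SR lt (cR v) (cR (v+1))) j len xs' ys'

def EE (j n : ℕ) (xs ys : Fin n → Σ i, A i) : Prop :=
  j ≤ d ∧ ∃ (t : ℕ) (U V : ℕ → ℕ) (W : Fin n → Option ℕ),
    U 0 = 0 ∧ V 0 = 0 ∧ U (t+1) = K+1 ∧ V (t+1) = K'+1 ∧
    (∀ w ≤ t, U w < U (w+1)) ∧ (∀ w ≤ t, V w < V (w+1)) ∧
    (∀ w ≤ t, gapOK j (U (w+1) - U w - 1) (V (w+1) - V w - 1)) ∧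
    (∀ q, W q = none → ((xs q).1.val < lo ∨ hi ≤ (xs q).1.val) ∧ ys q = xs q) ∧
    (∀ q w, W q = some w → 1 ≤ w ∧ w ≤ t ∧
      ((cL (U w - 1) ≤ (xs q).1.val ∧ (xs q).1.val < cL (U w - 1 + 1)) ∧
       (cR (V w - 1) ≤ (ys q).1.val ∧ (ys q).1.val < cR (V w - 1 + 1)))) ∧
    (∀ w, 1 ≤ w → w ≤ t →
      BlockEqv A SL SR lt cL cR j xs ys W w (U w - 1) (V w - 1))

lemma blockEqv_cast {j j' n w w' u v : ℕ} {xs ys : Fin n → Σ i, A i}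
    {W : Fin n → Option ℕ} (a b : Σ i, A i) (W' : Fin (n+1) → Option ℕ)
    (h : BlockEqv A SL SR lt cL cR j xs ys W w u v) (hj : j' ≤ j)
    (hW' : ∀ q : Fin (n+1), W' q = some w' → ∃ q₀, Fin.castSucc q₀ = q ∧ W q₀ = some w) :
    BlockEqv A SL SR lt cL cR j' (Fin.snoc xs a) (Fin.snoc ys b) W' w' u v := by
  obtain ⟨len, σ, xs', ys', hx, hy, hsurj, heqv⟩ := h
  refine ⟨len, fun i => (σ i).castSucc, xs', ys', ?_, ?_, ?_, heqv.mono hj⟩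
  · intro i; rw [Fin.snoc_castSucc]; exact hx i
  · intro i; rw [Fin.snoc_castSucc]; exact hy i
  · intro q hq
    obtain ⟨q₀, hq₀, hWq₀⟩ := hW' q hq
    obtain ⟨i, hi⟩ := hsurj q₀ hWq₀
    refine ⟨i, ?_⟩
    show (σ i).castSucc = q
    rw [hi]
    exact hq₀

lemma EE_symm {j n : ℕ} {xs ys : Fin n → Σ i, A i}
    (h : EE A SL SR lt d lo hi K K' cL cR j n xs ys) :
    EE A SR SL lt d lo hi K' K cR cL j n ys xs := by
  obtain ⟨hjd, t, U, V, W, hU0, hV0, hUt, hVt, hUm, hVm, hgap, hnone, hsome, hblk⟩ := h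
  refine ⟨hjd, t, V, U, W, hV0, hU0, hVt, hUt, hVm, hUm,
    fun w hw => gapOK_symm (hgap w hw), ?_, ?_, ?_⟩
  · intro q hq
    obtain ⟨h1, h2⟩ := hnone q hq
    rw [h2]
    exact ⟨h1, rfl⟩
  · intro q w hq
    obtain ⟨h1, h2, h3, h4⟩ := hsome q w hq
    exact ⟨h1, h2, h4, h3⟩
  · intro w h1 h2
    obtain ⟨len, σ, xs', ys', hx, hy, hsurj, heqv⟩ := hblk w h1 h2
    exact ⟨len, σ, ys', xs', hy, hx, hsurj, heqv.symm⟩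

end Main

end SP9

namespace SP9

set_option linter.unusedSectionVars false
set_option maxHeartbeats 2000000

section Main2

variable {L : Language} [L.IsRelational] {r : ℕ} (A : Fin r → Type)
  (SL SR : ∀ i, L.Structure (A i)) (lt : L.Relations 2)
  (d lo hi K K' : ℕ) (cL cR : ℕ → ℕ)

/-- all the bookkeeping facts that come out of an `EE` witness -/
lemma EE_atoms
    (hcL0 : cL 0 = lo) (hcLK : cL K = hi) (hcLm : ∀ u < K, cL u < cL (u+1))
    (hcR0 : cR 0 = lo) (hcRK : cR K' = hi) (hcRm : ∀ v < K', cR v < cR (v+1))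
    (hK1 : 1 ≤ K) (hK'1 : 1 ≤ K')
    (H0 : ∀ i : Fin r, i.val < lo ∨ hi ≤ i.val → SL i = SR i)
    (H1 : ∀ u v, u < K → v < K' →
      Eqv (seg A SL lt (cL u) (cL (u+1))) (seg A SR lt (cR v) (cR (v+1))) d 0
        (fun q => q.elim0) (fun q => q.elim0))
    {j n : ℕ} {xs ys : Fin n → Σ i, A i}
    (hE : EE A SL SR lt d lo hi K K' cL cR j n xs ys) :
    (∀ q q' : Fin n, xs q = xs q' ↔ ys q = ys q') ∧
    (∀ (m : ℕ) (R : L.Relations m) (σ : Fin m → Fin n),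
      ((orderedSum A SL lt).RelMap R (xs ∘ σ) ↔ (orderedSum A SR lt).RelMap R (ys ∘ σ))) := by
  obtain ⟨hjd, t, U, V, W, hU0, hV0, hUt, hVt, hUm, hVm, hgap, hnone, hsome, hblk⟩ := hE
  -- bounds on U, V
  have hUb : ∀ w, 1 ≤ w → w ≤ t → 1 ≤ U w ∧ U w ≤ K := by
    intro w h1 h2
    have hlow := smono_le U t hUm w 0 (by omega)
    rw [Nat.zero_add, hU0] at hlow
    have harg : w + (t + 1 - w) = t + 1 := by omega
    have hhigh := smono_le U t hUm (t + 1 - w) w (by omega)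
    rw [harg, hUt] at hhigh
    omega
  have hVb : ∀ w, 1 ≤ w → w ≤ t → 1 ≤ V w ∧ V w ≤ K' := by
    intro w h1 h2
    have hlow := smono_le V t hVm w 0 (by omega)
    rw [Nat.zero_add, hV0] at hlow
    have harg : w + (t + 1 - w) = t + 1 := by omega
    have hhigh := smono_le V t hVm (t + 1 - w) w (by omega)
    rw [harg, hVt] at hhigh
    omega
  have hblkx : ∀ (q : Fin n) w, W q = some w →
      cL (U w - 1) ≤ (xs q).1.val ∧ (xs q).1.val < cL (U w) := by
    intro q w hq
    obtain ⟨h1, h2, ⟨hx, _⟩⟩ := hsome q w hq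
    have := (hUb w h1 h2).1
    have heq : U w - 1 + 1 = U w := by omega
    rw [heq] at hx
    exact hx
  have hblky : ∀ (q : Fin n) w, W q = some w →
      cR (V w - 1) ≤ (ys q).1.val ∧ (ys q).1.val < cR (V w) := by
    intro q w hq
    obtain ⟨h1, h2, ⟨_, hy⟩⟩ := hsome q w hq
    have := (hVb w h1 h2).1
    have heq : V w - 1 + 1 = V w := by omega
    rw [heq] at hy
    exact hy
  have hmidx : ∀ (q : Fin n) w, W q = some w →
      lo ≤ (xs q).1.val ∧ (xs q).1.val < hi := by
    intro q w hq
    obtain ⟨h1, h2, _⟩ := hsome q w hq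
    obtain ⟨hU1, hU2⟩ := hUb w h1 h2
    have ha := cuts_mono cL K hcLm 0 (U w - 1) (by omega) (by omega)
    have hb := cuts_mono cL K hcLm (U w) K (by omega) (by omega)
    have := hblkx q w hq
    omega
  have hmidy : ∀ (q : Fin n) w, W q = some w →
      lo ≤ (ys q).1.val ∧ (ys q).1.val < hi := by
    intro q w hq
    obtain ⟨h1, h2, _⟩ := hsome q w hq
    obtain ⟨hV1, hV2⟩ := hVb w h1 h2
    have ha := cuts_mono cR K' hcRm 0 (V w - 1) (by omega) (by omega)
    have hb := cuts_mono cR K' hcRm (V w) K' (by omega) (by omega)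
    have := hblky q w hq
    omega
  -- block separation
  have hordU : ∀ w w', 1 ≤ w → w' ≤ t → w < w' → cL (U w) ≤ cL (U w' - 1) := by
    intro w w' h1 h2 h3
    have hs := smono_le U t hUm (w' - w) w (by omega)
    have harg : w + (w' - w) = w' := by omega
    rw [harg] at hs
    have := (hUb w' (by omega) h2).2
    exact cuts_mono cL K hcLm (U w) (U w' - 1) (by omega) (by omega)
  have hordV : ∀ w w', 1 ≤ w → w' ≤ t → w < w' → cR (V w) ≤ cR (V w' - 1) := by
    intro w w' h1 h2 h3
    have hs := smono_le V t hVm (w' - w) w (by omega)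
    have harg : w + (w' - w) = w' := by omega
    rw [harg] at hs
    have := (hVb w' (by omega) h2).2
    exact cuts_mono cR K' hcRm (V w) (V w' - 1) (by omega) (by omega)
  -- the comparison lemma
  have hcomp : ∀ q q' : Fin n, W q ≠ W q' →
      (((xs q).1.val < (xs q').1.val ↔ (ys q).1.val < (ys q').1.val) ∧
       (xs q).1.val ≠ (xs q').1.val ∧ (ys q).1.val ≠ (ys q').1.val) := by
    intro q q' hne
    rcases hWq : W q with _ | w <;> rcases hWq' : W q' with _ | w'
    · rw [hWq, hWq'] at hne; exact absurd rfl hne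
    · obtain ⟨hout, hyeq⟩ := hnone q hWq
      have hyv : (ys q).1.val = (xs q).1.val := by rw [hyeq]
      have hx' := hmidx q' w' hWq'
      have hy' := hmidy q' w' hWq'
      constructor
      · omega
      · omega
    · obtain ⟨hout, hyeq⟩ := hnone q' hWq'
      have hyv : (ys q').1.val = (xs q').1.val := by rw [hyeq]
      have hx' := hmidx q w hWq
      have hy' := hmidy q w hWq
      constructor
      · omega
      · omega
    · have hwne : w ≠ w' := by
        intro h
        rw [hWq, hWq', h] at hne
        exact hne rfl
      obtain ⟨hw1, hw2, _⟩ := hsome q w hWq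
      obtain ⟨hw'1, hw'2, _⟩ := hsome q' w' hWq'
      have hx := hblkx q w hWq
      have hy := hblky q w hWq
      have hx' := hblkx q' w' hWq'
      have hy' := hblky q' w' hWq'
      rcases Nat.lt_or_ge w w' with hlt | hge
      · have h1 := hordU w w' hw1 hw'2 hlt
        have h2 := hordV w w' hw1 hw'2 hlt
        constructor
        · omega
        · omega
      · have hlt' : w' < w := by omega
        have h1 := hordU w' w hw'1 hw2 hlt'
        have h2 := hordV w' w hw'1 hw2 hlt'
        constructor
        · omega
        · omega
  constructor
  · -- equality of atoms
    intro q q'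
    by_cases hWeq : W q = W q'
    · rcases hWq : W q with _ | w
      · rw [hWq] at hWeq
        obtain ⟨_, hyeq⟩ := hnone q hWq
        obtain ⟨_, hyeq'⟩ := hnone q' hWeq.symm
        rw [hyeq, hyeq']
      · rw [hWq] at hWeq
        have hWq' : W q' = some w := hWeq.symm
        obtain ⟨hw1, hw2, _⟩ := hsome q w hWq
        obtain ⟨len, ρ, xs', ys', hxv, hyv, hsurj, heqv⟩ := hblk w hw1 hw2
        obtain ⟨iq, hiq⟩ := hsurj q hWq
        obtain ⟨iq', hiq'⟩ := hsurj q' hWq'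
        have hf : (xs' iq = xs' iq') ↔ (ys' iq = ys' iq') :=
          heqv (BoundedFormula.equal (Term.var (Sum.inr iq)) (Term.var (Sum.inr iq')))
            (Nat.zero_le _)
        have e1 : xs q = xs q' ↔ xs' iq = xs' iq' := by
          rw [show xs' iq = xs' iq' ↔ (xs' iq).val = (xs' iq').val from Subtype.ext_iff]
          rw [hxv iq, hxv iq', hiq, hiq']
        have e2 : ys q = ys q' ↔ ys' iq = ys' iq' := by
          rw [show ys' iq = ys' iq' ↔ (ys' iq).val = (ys' iq').val from Subtype.ext_iff]
          rw [hyv iq, hyv iq', hiq, hiq']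
        rw [e1, e2]
        exact hf
    · have h := hcomp q q' hWeq
      constructor
      · intro he
        exact absurd (congrArg (fun z => z.1.val) he) h.2.1
      · intro he
        exact absurd (congrArg (fun z => z.1.val) he) h.2.2
  · -- relations
    intro m R σ
    match m, R, σ with
    | 0, R, σ =>
      -- nullary relations
      rw [orderedSum_relMap, orderedSum_relMap]
      have hD2 : ∀ (z : Fin 0 → Σ i, A i),
          ¬ ∃ h : 0 = 2, HEq R lt ∧ (z (Fin.cast h.symm 0)).1 < (z (Fin.cast h.symm 1)).1 := by
        rintro z ⟨h, -⟩
        exact absurd h (by norm_num)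
      have hblock : ∀ u v, u < K → v < K' →
          ((∃ i : Fin r, (cL u ≤ i.val ∧ i.val < cL (u+1)) ∧
              ∃ y : Fin 0 → A i, (SL i).RelMap R y) ↔
           (∃ i : Fin r, (cR v ≤ i.val ∧ i.val < cR (v+1)) ∧
              ∃ y : Fin 0 → A i, (SR i).RelMap R y)) := by
        intro u v hu hv
        have hf0 := H1 u v hu hv (BoundedFormula.rel R (fun k => k.elim0))
          (Nat.zero_le _)
        have hzx : ∀ (M : Type) (S : L.Structure M) (f g : Fin 0 → M),
            @Structure.RelMap L M S 0 R f ↔ @Structure.RelMap L M S 0 R g := by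
          intro M S f g
          rw [show f = g from funext fun k => k.elim0]
        have h1 : (seg A SL lt (cL u) (cL (u+1))).RelMap R (fun q : Fin 0 => q.elim0) ↔
            @BoundedFormula.Realize L _ (seg A SL lt (cL u) (cL (u+1))) Empty 0
              (BoundedFormula.rel R (fun k => k.elim0)) (fun e => e.elim) (fun q => q.elim0) :=
          hzx _ _ _ _
        have h2 : @BoundedFormula.Realize L _ (seg A SR lt (cR v) (cR (v+1))) Empty 0
              (BoundedFormula.rel R (fun k => k.elim0)) (fun e => e.elim) (fun q => q.elim0) ↔
            (seg A SR lt (cR v) (cR (v+1))).RelMap R (fun q : Fin 0 => q.elim0) :=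
          hzx _ _ _ _
        have hf : (seg A SL lt (cL u) (cL (u+1))).RelMap R (fun q : Fin 0 => q.elim0) ↔
            (seg A SR lt (cR v) (cR (v+1))).RelMap R (fun q : Fin 0 => q.elim0) :=
          h1.trans (hf0.trans h2)
        rw [seg_relMap, seg_relMap] at hf
        unfold segRel at hf
        constructor
        · rintro ⟨i, hiv, y, hR⟩
          have := hf.mp (Or.inl ⟨i, y, hiv, fun k => k.elim0, hR⟩)
          rcases this with ⟨i', y', hiv', _, hR'⟩ | ⟨h, -⟩
          · exact ⟨i', hiv', y', hR'⟩
          · exact absurd h (by norm_num)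
        · rintro ⟨i, hiv, y, hR⟩
          have := hf.mpr (Or.inl ⟨i, y, hiv, fun k => k.elim0, hR⟩)
          rcases this with ⟨i', y', hiv', _, hR'⟩ | ⟨h, -⟩
          · exact ⟨i', hiv', y', hR'⟩
          · exact absurd h (by norm_num)
      constructor
      · rintro (⟨i, y, _, hR⟩ | h2)
        · rcases Nat.lt_or_ge i.val lo with hlt | hge
          · exact Or.inl ⟨i, y, fun k => k.elim0, by rw [← H0 i (Or.inl hlt)]; exact hR⟩
          rcases Nat.lt_or_ge i.val hi with hlt2 | hge2
          · -- i in the middle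
            obtain ⟨u, hu, h1, h2'⟩ := cover cL K hcLm i.val (by omega) (by omega)
            have := (hblock u 0 hu hK'1).mp ⟨i, ⟨h1, h2'⟩, y, hR⟩
            obtain ⟨i', _, y', hR'⟩ := this
            exact Or.inl ⟨i', y', fun k => k.elim0, hR'⟩
          · exact Or.inl ⟨i, y, fun k => k.elim0, by rw [← H0 i (Or.inr hge2)]; exact hR⟩
        · exact absurd h2 (hD2 _)
      · rintro (⟨i, y, _, hR⟩ | h2)
        · rcases Nat.lt_or_ge i.val lo with hlt | hge
          · exact Or.inl ⟨i, y, fun k => k.elim0, by rw [H0 i (Or.inl hlt)]; exact hR⟩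
          rcases Nat.lt_or_ge i.val hi with hlt2 | hge2
          · obtain ⟨v, hv, h1, h2'⟩ := cover cR K' hcRm i.val (by omega) (by omega)
            have := (hblock 0 v hK1 hv).mpr ⟨i, ⟨h1, h2'⟩, y, hR⟩
            obtain ⟨i', _, y', hR'⟩ := this
            exact Or.inl ⟨i', y', fun k => k.elim0, hR'⟩
          · exact Or.inl ⟨i, y, fun k => k.elim0, by rw [H0 i (Or.inr hge2)]; exact hR⟩
        · exact absurd h2 (hD2 _)
    | (m'+1), R, σ =>
      by_cases hunif : ∀ k, W (σ k) = W (σ 0)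
      · rcases hW0 : W (σ 0) with _ | w
        · -- all coordinates outside the middle
          have houtk : ∀ k, ((xs (σ k)).1.val < lo ∨ hi ≤ (xs (σ k)).1.val) ∧
              ys (σ k) = xs (σ k) := fun k => hnone (σ k) ((hunif k).trans hW0)
          have hyx : ys ∘ σ = xs ∘ σ := funext fun k => (houtk k).2
          rw [hyx]
          rw [orderedSum_relMap, orderedSum_relMap]
          constructor
          · rintro (⟨i, y, hxy, hR⟩ | h2)
            · refine Or.inl ⟨i, y, hxy, ?_⟩
              have hi0 : ((xs ∘ σ) 0).1 = i := by rw [hxy 0]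
              have : SL i = SR i := H0 i (by rw [← hi0]; exact (houtk 0).1)
              rw [← this]
              exact hR
            · exact Or.inr h2
          · rintro (⟨i, y, hxy, hR⟩ | h2)
            · refine Or.inl ⟨i, y, hxy, ?_⟩
              have hi0 : ((xs ∘ σ) 0).1 = i := by rw [hxy 0]
              have : SL i = SR i := H0 i (by rw [← hi0]; exact (houtk 0).1)
              rw [this]
              exact hR
            · exact Or.inr h2
        · -- all coordinates in block pair w
          have hWk : ∀ k, W (σ k) = some w := fun k => (hunif k).trans hW0
          obtain ⟨hw1, hw2, _⟩ := hsome (σ 0) w (hWk 0)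
          have hUw := hUb w hw1 hw2
          have hVw := hVb w hw1 hw2
          obtain ⟨len, ρ, xs', ys', hxv, hyv, hsurj, heqv⟩ := hblk w hw1 hw2
          have hpx : ∀ k : Fin (m'+1), cL (U w - 1) ≤ ((xs ∘ σ) k).1.val ∧
              ((xs ∘ σ) k).1.val < cL (U w - 1 + 1) := by
            intro k
            have h := hblkx (σ k) w (hWk k)
            have : U w - 1 + 1 = U w := by omega
            rw [this]
            exact h
          have hpy : ∀ k : Fin (m'+1), cR (V w - 1) ≤ ((ys ∘ σ) k).1.val ∧
              ((ys ∘ σ) k).1.val < cR (V w - 1 + 1) := by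
            intro k
            have h := hblky (σ k) w (hWk k)
            have : V w - 1 + 1 = V w := by omega
            rw [this]
            exact h
          rw [relMap_global_seg A SL lt (cL (U w - 1)) (cL (U w - 1 + 1)) R (xs ∘ σ) hpx]
          rw [relMap_global_seg A SR lt (cR (V w - 1)) (cR (V w - 1 + 1)) R (ys ∘ σ) hpy]
          choose τ hτ using fun k => hsurj (σ k) (hWk k)
          have hfx : (fun k => (⟨(xs ∘ σ) k, hpx k⟩ :
              SegC A (cL (U w - 1)) (cL (U w - 1 + 1)))) = fun k => xs' (τ k) := by
            funext k
            apply Subtype.ext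
            show (xs ∘ σ) k = (xs' (τ k)).val
            rw [hxv (τ k), hτ k]
            rfl
          have hfy : (fun k => (⟨(ys ∘ σ) k, hpy k⟩ :
              SegC A (cR (V w - 1)) (cR (V w - 1 + 1)))) = fun k => ys' (τ k) := by
            funext k
            apply Subtype.ext
            show (ys ∘ σ) k = (ys' (τ k)).val
            rw [hyv (τ k), hτ k]
            rfl
          rw [hfx, hfy]
          exact heqv (BoundedFormula.rel R (fun k => Term.var (Sum.inr (τ k))))
            (Nat.zero_le _)
      · -- mixed: some coordinate differs from σ 0
        push_neg at hunif
        obtain ⟨k₀, hk₀⟩ := hunif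
        rw [orderedSum_relMap, orderedSum_relMap]
        have hD1L : ¬ ∃ (i : Fin r) (y : Fin (m'+1) → A i),
            (∀ k, (xs ∘ σ) k = ⟨i, y k⟩) ∧ (SL i).RelMap R y := by
          rintro ⟨i, y, hxy, -⟩
          have h0 : (xs (σ 0)).1 = i := by
            have := hxy 0
            rw [show (xs ∘ σ) 0 = xs (σ 0) from rfl] at this
            rw [this]
          have hk : (xs (σ k₀)).1 = i := by
            have := hxy k₀
            rw [show (xs ∘ σ) k₀ = xs (σ k₀) from rfl] at this
            rw [this]
          exact (hcomp (σ k₀) (σ 0) hk₀).2.1 (by rw [h0, hk])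
        have hD1R : ¬ ∃ (i : Fin r) (y : Fin (m'+1) → A i),
            (∀ k, (ys ∘ σ) k = ⟨i, y k⟩) ∧ (SR i).RelMap R y := by
          rintro ⟨i, y, hxy, -⟩
          have h0 : (ys (σ 0)).1 = i := by
            have := hxy 0
            rw [show (ys ∘ σ) 0 = ys (σ 0) from rfl] at this
            rw [this]
          have hk : (ys (σ k₀)).1 = i := by
            have := hxy k₀
            rw [show (ys ∘ σ) k₀ = ys (σ k₀) from rfl] at this
            rw [this]
          exact (hcomp (σ k₀) (σ 0) hk₀).2.2 (by rw [h0, hk])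
        have hne01 : m' + 1 = 2 → W (σ 0) ≠ W (σ 1) := by
          intro hm2 heq
          apply hk₀
          have hm : m' = 1 := by omega
          subst hm
          rcases Fin.exists_fin_two.mp ⟨k₀, rfl⟩ with h | h
          · fin_cases k₀
            · rfl
            · exact heq.symm
          · fin_cases k₀
            · rfl
            · exact heq.symm
        constructor
        · rintro (h1 | ⟨h2, hheq, hlt⟩)
          · exact absurd h1 hD1L
          · refine Or.inr ⟨h2, hheq, ?_⟩
            have hm : m' = 1 := by omega
            subst hm
            have e0 : (Fin.cast h2.symm 0) = (0 : Fin 2) := rfl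
            have e1 : (Fin.cast h2.symm 1) = (1 : Fin 2) := rfl
            rw [e0, e1] at hlt ⊢
            rw [Fin.lt_def] at hlt ⊢
            exact ((hcomp (σ 0) (σ 1) (hne01 rfl)).1).mp hlt
        · rintro (h1 | ⟨h2, hheq, hlt⟩)
          · exact absurd h1 hD1R
          · refine Or.inr ⟨h2, hheq, ?_⟩
            have hm : m' = 1 := by omega
            subst hm
            have e0 : (Fin.cast h2.symm 0) = (0 : Fin 2) := rfl
            have e1 : (Fin.cast h2.symm 1) = (1 : Fin 2) := rfl
            rw [e0, e1] at hlt ⊢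
            rw [Fin.lt_def] at hlt ⊢
            exact ((hcomp (σ 0) (σ 1) (hne01 rfl)).1).mpr hlt

end Main2

end SP9

namespace SP9

set_option linter.unusedSectionVars false
set_option maxHeartbeats 3000000

section Main3

variable {L : Language} [L.IsRelational] {r : ℕ} (A : Fin r → Type)
  (SL SR : ∀ i, L.Structure (A i)) (lt : L.Relations 2)
  (d lo hi K K' : ℕ) (cL cR : ℕ → ℕ)

lemma blockEqv_reindex {j n w u v u' v' : ℕ} {xs ys : Fin n → Σ i, A i}
    {W : Fin n → Option ℕ} (h : BlockEqv A SL SR lt cL cR j xs ys W w u v)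
    (hu : u' = u) (hv : v' = v) : BlockEqv A SL SR lt cL cR j xs ys W w u' v' := by
  rw [hu, hv]
  exact h

lemma snoc_zero {β : Type*} (f0 : Fin 0 → β) (z : β) :
    Fin.snoc f0 z = fun _ : Fin 1 => z := by
  funext i
  have hi : i = Fin.last 0 := Fin.ext (by omega)
  rw [hi, Fin.snoc_last]

lemma main_forth
    (hfinA : ∀ i, Finite (A i))
    (hcL0 : cL 0 = lo) (hcLK : cL K = hi) (hcLm : ∀ u < K, cL u < cL (u+1))
    (H1 : ∀ u v, u < K → v < K' →
      Eqv (seg A SL lt (cL u) (cL (u+1))) (seg A SR lt (cR v) (cR (v+1))) d 0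
        (fun q => q.elim0) (fun q => q.elim0))
    {j n : ℕ} {xs ys : Fin n → Σ i, A i}
    (hE : EE A SL SR lt d lo hi K K' cL cR (j+1) n xs ys) (a : Σ i, A i) :
    ∃ b, EE A SL SR lt d lo hi K K' cL cR j (n+1) (Fin.snoc xs a) (Fin.snoc ys b) := by
  obtain ⟨hjd, t, U, V, W, hU0, hV0, hUt, hVt, hUm, hVm, hgap, hnone, hsome, hblk⟩ := hE
  have hjd' : j ≤ d := by omega
  by_cases ha : a.1.val < lo ∨ hi ≤ a.1.val
  · -- a outside the middle: respond with a itself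
    refine ⟨a, hjd', t, U, V, Fin.snoc W none, hU0, hV0, hUt, hVt, hUm, hVm,
      fun w hw => gapOK_mono (hgap w hw) (by omega), ?_, ?_, ?_⟩
    · intro q hq
      rcases Fin.eq_castSucc_or_eq_last q with ⟨q₀, rfl⟩ | rfl
      · rw [Fin.snoc_castSucc] at hq
        rw [Fin.snoc_castSucc, Fin.snoc_castSucc]
        exact hnone q₀ hq
      · rw [Fin.snoc_last, Fin.snoc_last]
        exact ⟨ha, rfl⟩
    · intro q w hq
      rcases Fin.eq_castSucc_or_eq_last q with ⟨q₀, rfl⟩ | rfl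
      · rw [Fin.snoc_castSucc] at hq
        rw [Fin.snoc_castSucc, Fin.snoc_castSucc]
        exact hsome q₀ w hq
      · rw [Fin.snoc_last] at hq
        cases hq
    · intro w h1 h2
      refine blockEqv_cast A SL SR lt cL cR a a (Fin.snoc W none)
        (hblk w h1 h2) (by omega) ?_
      intro q hq
      rcases Fin.eq_castSucc_or_eq_last q with ⟨q₀, rfl⟩ | rfl
      · rw [Fin.snoc_castSucc] at hq
        exact ⟨q₀, rfl, hq⟩
      · rw [Fin.snoc_last] at hq
        cases hq
  · -- a in the middle
    push_neg at ha
    obtain ⟨ha1, ha2⟩ := ha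
    obtain ⟨u₀, hu₀K, hu₀1, hu₀2⟩ := cover cL K hcLm a.1.val
      (by rw [hcL0]; omega) (by rw [hcLK]; omega)
    by_cases hmatch : ∃ w, 1 ≤ w ∧ w ≤ t ∧ U w = u₀ + 1
    · -- matched block
      obtain ⟨w₀, hw₀1, hw₀2, hw₀U⟩ := hmatch
      obtain ⟨len, ρ, xs', ys', hxv, hyv, hsurj, heqv⟩ := hblk w₀ hw₀1 hw₀2
      have e1 : cL (U w₀ - 1) = cL u₀ := by rw [show U w₀ - 1 = u₀ by omega]
      have e2 : cL (U w₀ - 1 + 1) = cL (u₀ + 1) := by rw [show U w₀ - 1 + 1 = u₀ + 1 by omega]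
      have pfa : cL (U w₀ - 1) ≤ a.1.val ∧ a.1.val < cL (U w₀ - 1 + 1) := by
        rw [e1, e2]
        exact ⟨hu₀1, hu₀2⟩
      haveI : Finite (SegC A (cR (V w₀ - 1)) (cR (V w₀ - 1 + 1))) := finite_SegC A hfinA _ _
      obtain ⟨b', heqv'⟩ := eqv_forth heqv ⟨a, pfa⟩
      refine ⟨b'.val, hjd', t, U, V, Fin.snoc W (some w₀), hU0, hV0, hUt, hVt, hUm, hVm,
        fun w hw => gapOK_mono (hgap w hw) (by omega), ?_, ?_, ?_⟩
      · intro q hq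
        rcases Fin.eq_castSucc_or_eq_last q with ⟨q₀, rfl⟩ | rfl
        · rw [Fin.snoc_castSucc] at hq
          rw [Fin.snoc_castSucc, Fin.snoc_castSucc]
          exact hnone q₀ hq
        · rw [Fin.snoc_last] at hq
          cases hq
      · intro q w hq
        rcases Fin.eq_castSucc_or_eq_last q with ⟨q₀, rfl⟩ | rfl
        · rw [Fin.snoc_castSucc] at hq
          rw [Fin.snoc_castSucc, Fin.snoc_castSucc]
          exact hsome q₀ w hq
        · rw [Fin.snoc_last] at hq
          have hww : w = w₀ := (Option.some.injEq _ _ ▸ hq).symm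
          subst hww
          rw [Fin.snoc_last, Fin.snoc_last]
          exact ⟨hw₀1, hw₀2, pfa, b'.2⟩
      · intro w h1 h2
        by_cases hww : w = w₀
        · subst hww
          refine ⟨len + 1, Fin.snoc (fun i => (ρ i).castSucc) (Fin.last n),
            Fin.snoc xs' (⟨a, pfa⟩ : SegC A (cL (U w - 1)) (cL (U w - 1 + 1))), Fin.snoc ys' b', ?_, ?_, ?_, heqv'⟩
          · intro i
            rcases Fin.eq_castSucc_or_eq_last i with ⟨i₀, rfl⟩ | rfl
            · erw [Fin.snoc_castSucc, Fin.snoc_castSucc, Fin.snoc_castSucc]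
              exact hxv i₀
            · erw [Fin.snoc_last, Fin.snoc_last, Fin.snoc_last]
          · intro i
            rcases Fin.eq_castSucc_or_eq_last i with ⟨i₀, rfl⟩ | rfl
            · rw [Fin.snoc_castSucc, Fin.snoc_castSucc, Fin.snoc_castSucc]
              exact hyv i₀
            · rw [Fin.snoc_last, Fin.snoc_last, Fin.snoc_last]
          · intro q hq
            rcases Fin.eq_castSucc_or_eq_last q with ⟨q₀, rfl⟩ | rfl
            · rw [Fin.snoc_castSucc] at hq
              obtain ⟨i, hi⟩ := hsurj q₀ hq
              refine ⟨i.castSucc, ?_⟩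
              rw [Fin.snoc_castSucc]
              rw [hi]
            · refine ⟨Fin.last len, ?_⟩
              rw [Fin.snoc_last]
        · refine blockEqv_cast A SL SR lt cL cR a b'.val (Fin.snoc W (some w₀))
            (hblk w h1 h2) (by omega) ?_
          intro q hq
          rcases Fin.eq_castSucc_or_eq_last q with ⟨q₀, rfl⟩ | rfl
          · rw [Fin.snoc_castSucc] at hq
            exact ⟨q₀, rfl, hq⟩
          · rw [Fin.snoc_last] at hq
            have : w₀ = w := by
              injection hq
            exact absurd this.symm hww
    · -- unmatched block: insert a new matched pair
      obtain ⟨ws, hwt, hw1, hw2⟩ := find_between U t u₀ (by omega) (by rw [hUt]; omega)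
      have hne : U (ws + 1) ≠ u₀ + 1 := by
        intro h
        rcases Nat.lt_or_ge (ws + 1) (t + 1) with hlt | hge
        · exact hmatch ⟨ws + 1, by omega, by omega, h⟩
        · have he : ws + 1 = t + 1 := by omega
          rw [he, hUt] at h
          omega
      have hgapw := hgap ws hwt
      have hx : u₀ - U ws < U (ws + 1) - U ws - 1 := by omega
      obtain ⟨x', hx'g, hg1, hg2⟩ := gap_split hgapw hx
      set v₀ := V ws + x' with hv₀def
      have hVbound : V (ws + 1) ≤ K' + 1 := by
        have hs := smono_le V t hVm (t + 1 - (ws + 1)) (ws + 1) (by omega)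
        rw [show ws + 1 + (t + 1 - (ws + 1)) = t + 1 by omega, hVt] at hs
        omega
      have hv₀K : v₀ < K' := by omega
      haveI : Finite (SegC A (cR v₀) (cR (v₀ + 1))) := finite_SegC A hfinA _ _
      have h1j : Eqv (seg A SL lt (cL u₀) (cL (u₀ + 1)))
          (seg A SR lt (cR v₀) (cR (v₀ + 1))) (j + 1) 0
          (fun q => q.elim0) (fun q => q.elim0) :=
        (H1 u₀ v₀ hu₀K hv₀K).mono (by omega)
      obtain ⟨b', heqv'⟩ := eqv_forth h1j (⟨a, ⟨hu₀1, hu₀2⟩⟩ :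
        SegC A (cL u₀) (cL (u₀ + 1)))
      erw [snoc_zero, snoc_zero] at heqv'
      set f : ℕ → ℕ := fun w => if w ≤ ws then w else w + 1 with hfdef
      set U' : ℕ → ℕ := fun w => if w ≤ ws then U w else if w = ws + 1 then u₀ + 1 else U (w - 1)
        with hU'def
      set V' : ℕ → ℕ := fun w => if w ≤ ws then V w else if w = ws + 1 then v₀ + 1 else V (w - 1)
        with hV'def
      set W' : Fin (n+1) → Option ℕ :=
        Fin.snoc (fun q => (W q).map f) (some (ws + 1)) with hW'def
      have hU'a : ∀ w, w ≤ ws → U' w = U w := by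
        intro w h; simp only [hU'def]; rw [if_pos h]
      have hU'b : U' (ws + 1) = u₀ + 1 := by
        simp only [hU'def]
        split
        · omega
        · split
          · rfl
          · next h2 => exact absurd trivial h2
      have hU'c : ∀ w, ws + 2 ≤ w → U' w = U (w - 1) := by
        intro w h; simp only [hU'def]; rw [if_neg (by omega), if_neg (by omega)]
      have hV'a : ∀ w, w ≤ ws → V' w = V w := by
        intro w h; simp only [hV'def]; rw [if_pos h]
      have hV'b : V' (ws + 1) = v₀ + 1 := by
        simp only [hV'def]
        split
        · omega
        · split
          · rfl
          · next h2 => exact absurd trivial h2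
      have hV'c : ∀ w, ws + 2 ≤ w → V' w = V (w - 1) := by
        intro w h; simp only [hV'def]; rw [if_neg (by omega), if_neg (by omega)]
      have hU'd : ∀ w, ws + 1 ≤ w → U' (w + 1) = U w := by
        intro w h
        rw [hU'c (w+1) (by omega), Nat.add_sub_cancel]
      have hV'd : ∀ w, ws + 1 ≤ w → V' (w + 1) = V w := by
        intro w h
        rw [hV'c (w+1) (by omega), Nat.add_sub_cancel]
      have hfa : ∀ w, w ≤ ws → f w = w := by
        intro w h; simp only [hfdef]; rw [if_pos h]
      have hfb : ∀ w, ws + 1 ≤ w → f w = w + 1 := by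
        intro w h; simp only [hfdef]; rw [if_neg (by omega)]
      have hUV'eq : ∀ w₁, 1 ≤ w₁ → w₁ ≤ t → U' (f w₁) = U w₁ ∧ V' (f w₁) = V w₁ := by
        intro w₁ hh1 hh2
        by_cases hc : w₁ ≤ ws
        · rw [hfa w₁ hc, hU'a w₁ hc, hV'a w₁ hc]
          exact ⟨rfl, rfl⟩
        · rw [hfb w₁ (by omega), hU'c (w₁ + 1) (by omega), hV'c (w₁ + 1) (by omega)]
          simp
      refine ⟨b'.val, hjd', t + 1, U', V', W', by rw [hU'a 0 (by omega), hU0],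
        by rw [hV'a 0 (by omega), hV0], by rw [show t + 2 = t + 1 + 1 from rfl, hU'd (t+1) (by omega)]; exact hUt,
        by rw [show t + 2 = t + 1 + 1 from rfl, hV'd (t+1) (by omega)]; exact hVt, ?_, ?_, ?_, ?_, ?_, ?_⟩
      · -- U' strictly monotone
        intro w hw
        by_cases h1 : w + 1 ≤ ws
        · rw [hU'a w (by omega), hU'a (w+1) h1]
          exact hUm w (by omega)
        · by_cases h2 : w ≤ ws
          · have : w = ws := by omega
            subst this
            rw [hU'a w (le_refl w), hU'b]
            omega
          · by_cases h3 : w = ws + 1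
            · subst h3
              rw [hU'b, hU'd (ws + 1) (by omega)]
              omega
            · rw [hU'c w (by omega), hU'd w (by omega)]
              have hh := hUm (w - 1) (by omega)
              rw [show w - 1 + 1 = w by omega] at hh
              exact hh
      · -- V' strictly monotone
        intro w hw
        by_cases h1 : w + 1 ≤ ws
        · rw [hV'a w (by omega), hV'a (w+1) h1]
          exact hVm w (by omega)
        · by_cases h2 : w ≤ ws
          · have : w = ws := by omega
            subst this
            rw [hV'a w (le_refl w), hV'b]
            omega
          · by_cases h3 : w = ws + 1
            · subst h3
              rw [hV'b, hV'd (ws + 1) (by omega)]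
              omega
            · rw [hV'c w (by omega), hV'd w (by omega)]
              have hh := hVm (w - 1) (by omega)
              rw [show w - 1 + 1 = w by omega] at hh
              exact hh
      · -- gaps
        intro w hw
        by_cases h1 : w + 1 ≤ ws
        · rw [hU'a w (by omega), hU'a (w+1) h1, hV'a w (by omega), hV'a (w+1) h1]
          exact gapOK_mono (hgap w (by omega)) (by omega)
        · by_cases h2 : w ≤ ws
          · have : w = ws := by omega
            subst this
            rw [hU'a w (le_refl w), hU'b, hV'a w (le_refl w), hV'b]
            rw [show u₀ + 1 - U w - 1 = u₀ - U w by omega,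
              show v₀ + 1 - V w - 1 = v₀ - V w by omega,
              show v₀ - V w = x' by omega]
            exact hg1
          · by_cases h3 : w = ws + 1
            · subst h3
              rw [hU'b, hV'b, hU'd (ws + 1) (by omega), hV'd (ws + 1) (by omega)]
              rw [show U (ws + 1) - (u₀ + 1) - 1 =
                    (U (ws+1) - U ws - 1) - (u₀ - U ws) - 1 by omega,
                show V (ws + 1) - (v₀ + 1) - 1 =
                    (V (ws+1) - V ws - 1) - x' - 1 by omega]
              exact hg2
            · rw [hU'c w (by omega), hU'd w (by omega),
                hV'c w (by omega), hV'd w (by omega)]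
              have hh := gapOK_mono (hgap (w-1) (by omega)) (Nat.le_succ j)
              rw [show w - 1 + 1 = w by omega] at hh
              exact hh
      · -- none condition
        intro q hq
        rcases Fin.eq_castSucc_or_eq_last q with ⟨q₀, rfl⟩ | rfl
        · simp only [hW'def, Fin.snoc_castSucc] at hq
          rw [Option.map_eq_none_iff] at hq
          rw [Fin.snoc_castSucc, Fin.snoc_castSucc]
          exact hnone q₀ hq
        · simp only [hW'def, Fin.snoc_last] at hq
          cases hq
      · -- some condition
        intro q w hq
        rcases Fin.eq_castSucc_or_eq_last q with ⟨q₀, rfl⟩ | rfl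
        · simp only [hW'def, Fin.snoc_castSucc] at hq
          rw [Option.map_eq_some_iff] at hq
          obtain ⟨w₁, hw₁, hfw₁⟩ := hq
          obtain ⟨hs1, hs2, hsx, hsy⟩ := hsome q₀ w₁ hw₁
          obtain ⟨eU, eV⟩ := hUV'eq w₁ hs1 hs2
          rw [Fin.snoc_castSucc, Fin.snoc_castSucc, ← hfw₁, eU, eV]
          refine ⟨?_, ?_, hsx, hsy⟩
          · by_cases hc : w₁ ≤ ws
            · rw [hfa w₁ hc]; omega
            · rw [hfb w₁ (by omega)]; omega
          · by_cases hc : w₁ ≤ ws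
            · rw [hfa w₁ hc]; omega
            · rw [hfb w₁ (by omega)]; omega
        · simp only [hW'def, Fin.snoc_last] at hq
          have hww : w = ws + 1 := by
            injection hq with h
            exact h.symm
          subst hww
          rw [Fin.snoc_last, Fin.snoc_last, hU'b, hV'b]
          simp only [Nat.add_sub_cancel]
          exact ⟨by omega, by omega, ⟨hu₀1, hu₀2⟩, b'.2⟩
      · -- blocks
        intro w h1 h2
        by_cases hww : w = ws + 1
        · subst hww
          refine blockEqv_reindex A SL SR lt cL cR ?_
            (by rw [hU'b]) (by rw [hV'b])
          refine ⟨1, fun _ => Fin.last n, fun _ => ⟨a, ⟨hu₀1, hu₀2⟩⟩, fun _ => b',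
            ?_, ?_, ?_, heqv'⟩
          · intro i
            rw [Fin.snoc_last]
          · intro i
            rw [Fin.snoc_last]
          · intro q hq
            rcases Fin.eq_castSucc_or_eq_last q with ⟨q₀, rfl⟩ | rfl
            · simp only [hW'def, Fin.snoc_castSucc] at hq
              rw [Option.map_eq_some_iff] at hq
              obtain ⟨w₁, hw₁, hfw₁⟩ := hq
              obtain ⟨hs1, hs2, -⟩ := hsome q₀ w₁ hw₁
              exfalso
              by_cases hc : w₁ ≤ ws
              · rw [hfa w₁ hc] at hfw₁; omega
              · rw [hfb w₁ (by omega)] at hfw₁; omega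
            · exact ⟨0, rfl⟩
        · by_cases hc : w ≤ ws
          · refine blockEqv_reindex A SL SR lt cL cR ?_
              (by rw [hU'a w hc]) (by rw [hV'a w hc])
            refine blockEqv_cast A SL SR lt cL cR a b'.val W'
              (hblk w h1 (by omega)) (by omega) ?_
            intro q hq
            rcases Fin.eq_castSucc_or_eq_last q with ⟨q₀, rfl⟩ | rfl
            · simp only [hW'def, Fin.snoc_castSucc] at hq
              rw [Option.map_eq_some_iff] at hq
              obtain ⟨w₁, hw₁, hfw₁⟩ := hq
              have hw₁w : w₁ = w := by
                by_cases hcc : w₁ ≤ ws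
                · rw [hfa w₁ hcc] at hfw₁; omega
                · rw [hfb w₁ (by omega)] at hfw₁; omega
              subst hw₁w
              exact ⟨q₀, rfl, hw₁⟩
            · simp only [hW'def, Fin.snoc_last] at hq
              injection hq with h
              omega
          · -- w ≥ ws + 2 : old block w - 1
            refine blockEqv_reindex A SL SR lt cL cR ?_
              (by rw [hU'c w (by omega)]) (by rw [hV'c w (by omega)])
            refine blockEqv_cast A SL SR lt cL cR a b'.val W'
              (hblk (w-1) (by omega) (by omega)) (by omega) ?_
            intro q hq
            rcases Fin.eq_castSucc_or_eq_last q with ⟨q₀, rfl⟩ | rfl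
            · simp only [hW'def, Fin.snoc_castSucc] at hq
              rw [Option.map_eq_some_iff] at hq
              obtain ⟨w₁, hw₁, hfw₁⟩ := hq
              have hw₁w : w₁ = w - 1 := by
                by_cases hcc : w₁ ≤ ws
                · rw [hfa w₁ hcc] at hfw₁; omega
                · rw [hfb w₁ (by omega)] at hfw₁; omega
              subst hw₁w
              exact ⟨q₀, rfl, hw₁⟩
            · simp only [hW'def, Fin.snoc_last] at hq
              injection hq with h
              omega

end Main3

end SP9

namespace SP9

set_option linter.unusedSectionVars false
set_option maxHeartbeats 3000000

section Main4

variable {L : Language} [L.IsRelational] {r : ℕ} (A : Fin r → Type)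
  (SL SR : ∀ i, L.Structure (A i)) (lt : L.Relations 2)
  (d lo hi K K' : ℕ) (cL cR : ℕ → ℕ)

lemma main_thd
    (hfinA : ∀ i, Finite (A i))
    (hcL0 : cL 0 = lo) (hcLK : cL K = hi) (hcLm : ∀ u < K, cL u < cL (u+1))
    (hcR0 : cR 0 = lo) (hcRK : cR K' = hi) (hcRm : ∀ v < K', cR v < cR (v+1))
    (hK1 : 1 ≤ K) (hK'1 : 1 ≤ K') (hGap : gapOK d K K')
    (H0 : ∀ i : Fin r, i.val < lo ∨ hi ≤ i.val → SL i = SR i)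
    (H1 : ∀ u v, u < K → v < K' →
      Eqv (seg A SL lt (cL u) (cL (u+1))) (seg A SR lt (cR v) (cR (v+1))) d 0
        (fun q => q.elim0) (fun q => q.elim0)) :
    thd d (Σ i, A i) (orderedSum A SL lt) = thd d (Σ i, A i) (orderedSum A SR lt) := by
  have hback : ∀ k n xs ys, EE A SL SR lt d lo hi K K' cL cR (k+1) n xs ys →
      ∀ b, ∃ a, EE A SL SR lt d lo hi K K' cL cR k (n+1) (Fin.snoc xs a) (Fin.snoc ys b) := by
    intro k n xs ys hE b
    obtain ⟨a, ha⟩ := main_forth A SR SL lt d lo hi K' K cR cL hfinA hcR0 hcRK hcRm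
      (fun v u hv hu => (H1 u v hu hv).symm)
      (EE_symm A SL SR lt d lo hi K K' cL cR hE) b
    exact ⟨a, EE_symm A SR SL lt d lo hi K' K cR cL ha⟩
  have hiff := ef_sound (orderedSum A SL lt) (orderedSum A SR lt)
    (EE A SL SR lt d lo hi K K' cL cR)
    (fun k n xs ys hE => (EE_atoms A SL SR lt d lo hi K K' cL cR
      hcL0 hcLK hcLm hcR0 hcRK hcRm hK1 hK'1 H0 H1 hE).1)
    (fun k n xs ys hE => (EE_atoms A SL SR lt d lo hi K K' cL cR
      hcL0 hcLK hcLm hcR0 hcRK hcRm hK1 hK'1 H0 H1 hE).2)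
    (fun k n xs ys hE a => main_forth A SL SR lt d lo hi K K' cL cR
      hfinA hcL0 hcLK hcLm H1 hE a)
    hback
  have hE0 : EE A SL SR lt d lo hi K K' cL cR d 0
      (fun q => q.elim0) (fun q => q.elim0) := by
    refine ⟨le_refl d, 0, (fun w => if w = 0 then 0 else K + 1),
      (fun w => if w = 0 then 0 else K' + 1), (fun q => q.elim0),
      by simp, by simp, by simp, by simp, ?_, ?_, ?_, ?_, ?_, ?_⟩
    · intro w hw
      have : w = 0 := by omega
      subst this
      simp
    · intro w hw
      have : w = 0 := by omega
      subst this
      simp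
    · intro w hw
      have : w = 0 := by omega
      subst this
      simpa using hGap
    · intro q
      exact q.elim0
    · intro q
      exact q.elim0
    · intro w h1 h2
      omega
  apply Set.ext
  intro φ
  simp only [thd, Set.mem_setOf_eq]
  constructor
  · rintro ⟨h1, h2⟩
    exact ⟨h1, (sentenceRealize_iff _ φ).mpr ((hiff 0 φ d _ _ h1 hE0).mp
      ((sentenceRealize_iff _ φ).mp h2))⟩
  · rintro ⟨h1, h2⟩
    exact ⟨h1, (sentenceRealize_iff _ φ).mpr ((hiff 0 φ d _ _ h1 hE0).mpr
      ((sentenceRealize_iff _ φ).mp h2))⟩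

end Main4

end SP9


set_option maxHeartbeats 6000000 in
theorem stmt_9 {L : Language} [L.IsRelational] [∀ n, Finite (L.Relations n)]
    (lt : L.Relations 2) (d c k₀ r : ℕ)
    (hfin : (theoriesD lt d).Finite) (hcard : Nat.card (theoriesD lt d) = c)
    -- the Ramsey arrow k₀ → (3^{d+8})²_{c²}
    (hram : ∀ col : Fin k₀ → Fin k₀ → Fin (c * c),
      ∃ X : Finset (Fin k₀), X.card = 3 ^ (d + 8) ∧
        ∀ a ∈ X, ∀ b ∈ X, ∀ a' ∈ X, ∀ b' ∈ X, a < b → a' < b' → col a b = col a' b')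
    (A : Fin r → Type) (Syes Sno : ∀ i, L.Structure (A i))
    (hfinA : ∀ i, Finite (A i))
    (hlinY : ∀ i, IsLinearOrder (A i) (fun a b => (Syes i).RelMap lt ![a, b]))
    (hlinN : ∀ i, IsLinearOrder (A i) (fun a b => (Sno i).RelMap lt ![a, b]))
    (J : Finset (Fin r)) (hJ : J.card = k₀) :
    ∃ (Q : Finset (Fin r)) (s : Fin r), s ∈ J ∧ s ∉ Q ∧
      thd d (Σ i, A i)
          (orderedSum A (fun i => if i ∈ Q then Syes i else Sno i) lt) =
        thd d (Σ i, A i)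
          (orderedSum A (fun i => if i ∈ insert s Q then Syes i else Sno i) lt) := by
  classical
  open SP9 in
  haveI : Finite (theoriesD lt d) := hfin.to_subtype
  set m := 3 ^ (d + 8) with hmdef
  have hm3 : 3 ≤ m := by
    rw [hmdef]
    calc (3:ℕ) = 3 ^ 1 := by norm_num
    _ ≤ 3 ^ (d + 8) := Nat.pow_le_pow_right (by norm_num) (by omega)
  have hpow : 2 ^ d + 2 ≤ m := by
    have h1 : 1 ≤ 2 ^ d := Nat.one_le_two_pow
    have h2 : 2 ^ d ≤ 3 ^ d := Nat.pow_le_pow_left (by norm_num) d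
    have h3 : 3 ^ (d + 1) = 3 ^ d * 3 := pow_succ 3 d
    have h4 : 3 ^ (d + 1) ≤ 3 ^ (d + 8) := Nat.pow_le_pow_right (by norm_num) (by omega)
    rw [hmdef]
    omega
  let enc : (theoriesD lt d) ≃ Fin c := Finite.equivFinOfCardEq hcard
  let J' := J.orderEmbOfFin hJ
  let pat : Fin k₀ → ∀ i, L.Structure (A i) :=
    fun a i => if i = J' a then Syes i else Sno i
  have hpatlin : ∀ (a : Fin k₀) (i : Fin r),
      IsLinearOrder (A i) (fun x y => (pat a i).RelMap lt ![x, y]) := by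
    intro a i
    show IsLinearOrder (A i) (fun x y =>
      (if i = J' a then Syes i else Sno i).RelMap lt ![x, y])
    by_cases h : i = J' a
    · rw [if_pos h]; exact hlinY i
    · rw [if_neg h]; exact hlinN i
  have hmemTH : ∀ a b : Fin k₀,
      thd d _ (SP9.seg A (pat a) lt (J' a).val (J' b).val) ∈ theoriesD lt d :=
    fun a b => SP9.thd_seg_mem A (pat a) lt _ _ d hfinA (hpatlin a)
  let col : Fin k₀ → Fin k₀ → Fin (c * c) := fun a b =>
    ⟨(enc ⟨_, hmemTH a b⟩).val, by
      have h1 : (enc ⟨_, hmemTH a b⟩).val < c := (enc ⟨_, hmemTH a b⟩).isLt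
      have h2 : c ≤ c * c := Nat.le_mul_of_pos_left c (by omega)
      omega⟩
  obtain ⟨X, hXcard, hXmono⟩ := hram col
  have hcoleq : ∀ a b a' b' : Fin k₀, a ∈ X → b ∈ X → a' ∈ X → b' ∈ X → a < b → a' < b' →
      thd d _ (SP9.seg A (pat a) lt (J' a).val (J' b).val) =
      thd d _ (SP9.seg A (pat a') lt (J' a').val (J' b').val) := by
    intro a b a' b' ha hb ha' hb' hab hab'
    have hc := hXmono a ha b hb a' ha' b' hb' hab hab'
    have hval : (col a b).val = (col a' b').val := congrArg Fin.val hc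
    have henc : enc ⟨_, hmemTH a b⟩ = enc ⟨_, hmemTH a' b'⟩ := Fin.ext hval
    have hXY := enc.injective henc
    exact congrArg Subtype.val hXY
  let g := X.orderEmbOfFin hXcard
  have hgmem : ∀ t : Fin m, g t ∈ X := fun t => X.orderEmbOfFin_mem hXcard t
  let nb : ℕ → ℕ := fun t => if h : t < m then (J' (g ⟨t, h⟩)).val else 0
  have hnb : ∀ (t : ℕ) (h : t < m), nb t = (J' (g ⟨t, h⟩)).val := fun t h => dif_pos h
  have hmono : ∀ t t' : ℕ, t < t' → t' < m → nb t < nb t' := by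
    intro t t' h h'
    rw [hnb t (by omega), hnb t' h']
    exact J'.strictMono (g.strictMono (by exact Fin.mk_lt_mk.mpr h))
  set s : Fin r := J' (g ⟨1, by omega⟩) with hsdef
  set Q : Finset (Fin r) := Finset.image (fun t : Fin m => J' (g t))
    (Finset.univ.filter (fun t : Fin m => t.val ≠ 1 ∧ t.val + 1 < m)) with hQdef
  have binj : ∀ t t' : Fin m, J' (g t) = J' (g t') → t = t' := by
    intro t t' h
    exact g.injective (J'.injective h)
  have hQmem : ∀ i : Fin r, i ∈ Q ↔
      ∃ t : Fin m, (t.val ≠ 1 ∧ t.val + 1 < m) ∧ J' (g t) = i := by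
    intro i
    rw [hQdef]
    simp only [Finset.mem_image, Finset.mem_filter, Finset.mem_univ, true_and]
  have hQ'mem : ∀ i : Fin r, i ∈ insert s Q ↔
      ∃ t : Fin m, t.val + 1 < m ∧ J' (g t) = i := by
    intro i
    rw [Finset.mem_insert, hQmem i]
    constructor
    · rintro (rfl | ⟨t, ⟨h1, h2⟩, h3⟩)
      · exact ⟨⟨1, by omega⟩, by show 1 + 1 < m; omega, rfl⟩
      · exact ⟨t, h2, h3⟩
    · rintro ⟨t, h2, h3⟩
      by_cases h1 : t.val = 1
      · left
        rw [hsdef, ← h3]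
        congr 1
        congr 1
        exact Fin.ext h1
      · right
        exact ⟨t, ⟨h1, h2⟩, h3⟩
  have hkey : ∀ (tt tt' : ℕ), tt < tt' → tt' ≤ m - 1 → ∀ i : Fin r,
      nb tt ≤ i.val → i.val < nb tt' → ∀ t'' : Fin m, J' (g t'') = i →
      tt ≤ t''.val ∧ t''.val < tt' := by
    intro tt tt' h1 h2 i hi1 hi2 t'' ht''
    have hieq : i.val = nb t''.val := by
      rw [hnb t''.val t''.isLt, ← ht'']
    constructor
    · by_contra hc
      push_neg at hc
      have := hmono t''.val tt hc (by omega)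
      omega
    · by_contra hc
      push_neg at hc
      rcases Nat.lt_or_ge tt' t''.val with h | h
      · have := hmono tt' t''.val h t''.isLt
        omega
      · have : tt' = t''.val := by omega
        rw [← this] at hieq
        omega
  -- the two pattern identifications
  have hcongrL : ∀ (tt tt' : ℕ) (htt : tt < tt') (htt' : tt' ≤ m - 1)
      (h1 : tt ≠ 1) (h2 : tt + 1 < m)
      (huniq : ∀ z, tt ≤ z → z < tt' → z ≠ 1 → z = tt),
      SP9.seg A (fun i => if i ∈ Q then Syes i else Sno i) lt (nb tt) (nb tt') =
      SP9.seg A (pat (g ⟨tt, by omega⟩)) lt (nb tt) (nb tt') := by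
    intro tt tt' htt htt' h1 h2 huniq
    apply SP9.seg_congr
    intro i hi1 hi2
    have hiff : i ∈ Q ↔ i = J' (g ⟨tt, by omega⟩) := by
      rw [hQmem i]
      constructor
      · rintro ⟨t'', ⟨hc1, hc2⟩, h3⟩
        obtain ⟨hk1, hk2⟩ := hkey tt tt' htt htt' i hi1 hi2 t'' h3
        have := huniq t''.val hk1 hk2 hc1
        rw [← h3]
        congr 1
        congr 1
        exact Fin.ext this
      · intro h3
        exact ⟨⟨tt, by omega⟩, ⟨h1, h2⟩, h3.symm⟩
    show (if i ∈ Q then Syes i else Sno i) = (if i = J' (g ⟨tt, by omega⟩) then Syes i else Sno i)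
    by_cases h : i ∈ Q
    · rw [if_pos h, if_pos (hiff.mp h)]
    · rw [if_neg h, if_neg (fun hc => h (hiff.mpr hc))]
  have hcongrR : ∀ (tt tt' : ℕ) (htt : tt < tt') (htt' : tt' ≤ m - 1)
      (h2 : tt + 1 < m)
      (huniq : ∀ z, tt ≤ z → z < tt' → z = tt),
      SP9.seg A (fun i => if i ∈ insert s Q then Syes i else Sno i) lt (nb tt) (nb tt') =
      SP9.seg A (pat (g ⟨tt, by omega⟩)) lt (nb tt) (nb tt') := by
    intro tt tt' htt htt' h2 huniq
    apply SP9.seg_congr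
    intro i hi1 hi2
    have hiff : i ∈ insert s Q ↔ i = J' (g ⟨tt, by omega⟩) := by
      rw [hQ'mem i]
      constructor
      · rintro ⟨t'', hc2, h3⟩
        obtain ⟨hk1, hk2⟩ := hkey tt tt' htt htt' i hi1 hi2 t'' h3
        have := huniq t''.val hk1 hk2
        rw [← h3]
        congr 1
        congr 1
        exact Fin.ext this
      · intro h3
        exact ⟨⟨tt, by omega⟩, h2, h3.symm⟩
    show (if i ∈ insert s Q then Syes i else Sno i) =
      (if i = J' (g ⟨tt, by omega⟩) then Syes i else Sno i)
    by_cases h : i ∈ insert s Q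
    · rw [if_pos h, if_pos (hiff.mp h)]
    · rw [if_neg h, if_neg (fun hc => h (hiff.mpr hc))]
  refine ⟨Q, s, ?_, ?_, ?_⟩
  · rw [hsdef]
    exact J.orderEmbOfFin_mem hJ _
  · intro hc
    rw [hQmem] at hc
    obtain ⟨t, ⟨h1, _⟩, h3⟩ := hc
    rw [hsdef] at h3
    have := binj t ⟨1, by omega⟩ h3
    rw [this] at h1
    exact h1 rfl
  · -- the main equality, via main_thd
    apply SP9.main_thd A _ _ lt d (nb 0) (nb (m-1)) (m-2) (m-1)
      (fun u => if u = 0 then nb 0 else nb (u+1)) nb hfinA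
    · rw [if_pos rfl]
    · rw [if_neg (by omega : ¬ (m - 2 = 0)), show m - 2 + 1 = m - 1 by omega]
    · intro u hu
      by_cases h0 : u = 0
      · subst h0
        rw [if_pos rfl, if_neg (by omega : ¬ (0 + 1 = 0))]
        exact hmono 0 2 (by omega) (by omega)
      · rw [if_neg h0, if_neg (by omega : ¬ (u + 1 = 0))]
        exact hmono (u+1) (u+2) (by omega) (by omega)
    · rfl
    · rfl
    · intro v hv
      exact hmono v (v+1) (by omega) (by omega)
    · omega
    · omega
    · exact Or.inr ⟨by omega, by omega⟩
    · -- H0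
      intro i hout
      have hsval : s.val = nb 1 := by rw [hnb 1 (by omega)]
      have hne : i ≠ s := by
        intro hc
        subst hc
        have h1 := hmono 0 1 (by omega) (by omega)
        have h2 := hmono 1 (m-1) (by omega) (by omega)
        omega
      by_cases hq : i ∈ Q
      · rw [if_pos hq, if_pos (Finset.mem_insert_of_mem hq)]
      · rw [if_neg hq, if_neg (by
          intro hc
          rcases Finset.mem_insert.mp hc with h | h
          · exact hne h
          · exact hq h)]
    · -- H1
      intro u v hu hv
      by_cases h0 : u = 0
      · subst h0
        rw [show (if (0:ℕ) = 0 then nb 0 else nb (0+1)) = nb 0 from if_pos rfl,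
          show (if (0:ℕ)+1 = 0 then nb 0 else nb (0+1+1)) = nb 2 from if_neg (by omega)]
        rw [hcongrL 0 2 (by omega) (by omega) (by omega) (by omega)
          (fun z hz1 hz2 hz3 => by omega)]
        rw [hcongrR v (v+1) (by omega) (by omega) (by omega)
          (fun z hz1 hz2 => by omega)]
        apply SP9.thd_eq_eqv
        rw [hnb 0 (by omega), hnb 2 (by omega), hnb v (by omega), hnb (v+1) (by omega)]
        have hth := hcoleq (g ⟨0, by omega⟩) (g ⟨2, by omega⟩) (g ⟨v, by omega⟩)
          (g ⟨v+1, by omega⟩) (hgmem _) (hgmem _) (hgmem _) (hgmem _)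
          (g.strictMono (Fin.mk_lt_mk.mpr (by omega)))
          (g.strictMono (Fin.mk_lt_mk.mpr (by omega)))
        exact hth
      · rw [show (if u = 0 then nb 0 else nb (u+1)) = nb (u+1) from if_neg h0,
          show (if u+1 = 0 then nb 0 else nb (u+1+1)) = nb (u+2) from if_neg (by omega)]
        rw [hcongrL (u+1) (u+2) (by omega) (by omega) (by omega) (by omega)
          (fun z hz1 hz2 hz3 => by omega)]
        rw [hcongrR v (v+1) (by omega) (by omega) (by omega)
          (fun z hz1 hz2 => by omega)]
        apply SP9.thd_eq_eqv
        rw [hnb (u+1) (by omega), hnb (u+2) (by omega), hnb v (by omega),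
          hnb (v+1) (by omega)]
        have hth := hcoleq (g ⟨u+1, by omega⟩) (g ⟨u+2, by omega⟩) (g ⟨v, by omega⟩)
          (g ⟨v+1, by omega⟩) (hgmem _) (hgmem _) (hgmem _) (hgmem _)
          (g.strictMono (Fin.mk_lt_mk.mpr (by omega)))
          (g.strictMono (Fin.mk_lt_mk.mpr (by omega)))
        exact hth
end

section
/- Let p₀,…,p_{ℓ−1} ∈ [0, ξ] ⊆ [0,1] and let (ξ_j)_{j≤ℓ} be a nondecreasing sequence in [0,1]. Then Σ_{j≤ℓ} (Σ_{u⊆{0,…,ℓ−1}, |u|=j} Π_{m∈u} p_m · Π_{m∉u} (1−p_m)) · (j/ℓ) · ξ_j ≤ Σ_{j≤ℓ} C(ℓ,j)·ξ^j·(1−ξ)^{ℓ−j}·(j/ℓ)·ξ_j. That is, the expression is maximized over p ∈ [0,ξ]^ℓ when all p_m = ξ. -/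
/-!
Write the left side as `𝔼[f |A|]` with `f j = (j / ℓ) ξ_j` monotone, where `A` contains each `m`
independently with probability `p m`. Conditioning on whether `a ∈ A` turns `𝔼[f |A|]` into
`𝔼[g |A \ {a}|]` with `g j = (1 - p a) f j + p a f (j + 1)`; since `f` is monotone, `g` grows
with `p a` and is itself monotone. Raising the probabilities to `ξ` one at a time, by induction
on the ground set, only increases the expectation, and at `p ≡ ξ` the law of `|A|` is binomial.
-/

open Finset

section PoissonBinomial

variable {α : Type*} [DecidableEq α]

/-- `𝔼[f |A|]` for a random `A ⊆ s` containing each `m` independently with probability `p m`. -/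
noncomputable def poissonBinomialExpect (s : Finset α) (p : α → ℝ) (f : ℕ → ℝ) : ℝ :=
  ∑ u ∈ s.powerset, (∏ m ∈ u, p m) * (∏ m ∈ s \ u, (1 - p m)) * f #u

theorem poissonBinomialExpect_insert {s : Finset α} {a : α} (ha : a ∉ s) (p : α → ℝ)
    (f : ℕ → ℝ) :
    poissonBinomialExpect (insert a s) p f =
      poissonBinomialExpect s p (fun j => (1 - p a) * f j + p a * f (j + 1)) := by
  unfold poissonBinomialExpect
  rw [sum_powerset_insert ha, ← sum_add_distrib]
  refine sum_congr rfl fun u hu => ?_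
  have hau : a ∉ u := fun h => ha (mem_powerset.1 hu h)
  have has : a ∉ s \ u := fun h => ha (mem_sdiff.1 h).1
  rw [insert_sdiff_of_notMem _ hau, insert_sdiff_insert, sdiff_insert_of_notMem ha,
    prod_insert has, prod_insert hau, card_insert_of_notMem hau]
  ring

theorem poissonBinomialExpect_mono {s : Finset α} {p : α → ℝ}
    (hp : ∀ m ∈ s, p m ∈ Set.Icc (0 : ℝ) 1) {f g : ℕ → ℝ} (hfg : ∀ j, f j ≤ g j) :
    poissonBinomialExpect s p f ≤ poissonBinomialExpect s p g := by
  refine sum_le_sum fun u hu => mul_le_mul_of_nonneg_left (hfg _) ?_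
  have hus := mem_powerset.1 hu
  exact mul_nonneg (prod_nonneg fun m hm => (hp m (hus hm)).1)
    (prod_nonneg fun m hm => sub_nonneg.2 (hp m (mem_sdiff.1 hm).1).2)

theorem poissonBinomialExpect_le_of_le {s : Finset α} {p : α → ℝ} {ξ : ℝ}
    (hξ : ξ ≤ 1) (hp : ∀ m ∈ s, p m ∈ Set.Icc 0 ξ) {f : ℕ → ℝ} (hf : Monotone f) :
    poissonBinomialExpect s p f ≤ poissonBinomialExpect s (fun _ => ξ) f := by
  induction s using Finset.induction_on generalizing f with
  | empty => rfl
  | @insert a s ha ih =>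
    have hps : ∀ m ∈ s, p m ∈ Set.Icc 0 ξ := fun m hm => hp m (mem_insert_of_mem hm)
    obtain ⟨hpa₀, hpaξ⟩ := hp a (mem_insert_self a s)
    have hstep : ∀ j, f j ≤ f (j + 1) := fun j => hf j.le_succ
    have hmix : Monotone fun j => (1 - ξ) * f j + ξ * f (j + 1) := fun i j hij => by
      have := hf hij
      have := hf (Nat.succ_le_succ hij)
      nlinarith
    rw [poissonBinomialExpect_insert ha, poissonBinomialExpect_insert ha]
    calc poissonBinomialExpect s p (fun j => (1 - p a) * f j + p a * f (j + 1))
        ≤ poissonBinomialExpect s p (fun j => (1 - ξ) * f j + ξ * f (j + 1)) :=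
          poissonBinomialExpect_mono (fun m hm => ⟨(hps m hm).1, (hps m hm).2.trans hξ⟩)
            fun j => by nlinarith [hstep j]
      _ ≤ _ := ih hps hmix

theorem poissonBinomialExpect_eq_sum_range (s : Finset α) (p : α → ℝ) (f : ℕ → ℝ) :
    poissonBinomialExpect s p f = ∑ j ∈ range (#s + 1),
      (∑ u ∈ s.powersetCard j, (∏ m ∈ u, p m) * ∏ m ∈ s \ u, (1 - p m)) * f j := by
  rw [poissonBinomialExpect, sum_powerset]
  refine sum_congr rfl fun j _ => ?_
  rw [sum_mul]
  refine sum_congr rfl fun u hu => ?_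
  rw [(mem_powersetCard.1 hu).2]

theorem poissonBinomialExpect_const (s : Finset α) (ξ : ℝ) (f : ℕ → ℝ) :
    poissonBinomialExpect s (fun _ => ξ) f =
      ∑ j ∈ range (#s + 1), ((#s).choose j : ℝ) * ξ ^ j * (1 - ξ) ^ (#s - j) * f j := by
  rw [poissonBinomialExpect, sum_powerset]
  refine sum_congr rfl fun j _ => ?_
  have hterm : ∀ u ∈ s.powersetCard j,
      (∏ _m ∈ u, ξ) * (∏ _m ∈ s \ u, (1 - ξ)) * f #u = ξ ^ j * (1 - ξ) ^ (#s - j) * f j := by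
    intro u hu
    obtain ⟨hus, rfl⟩ := mem_powersetCard.1 hu
    rw [prod_const, prod_const, card_sdiff_of_subset hus]
  rw [sum_congr rfl hterm, sum_const, card_powersetCard, nsmul_eq_mul]
  ring

end PoissonBinomial

theorem stmt_12 (ℓ : ℕ) (ξ : ℝ) (hξ : ξ ∈ Set.Icc (0 : ℝ) 1)
    (p : Fin ℓ → ℝ) (hp : ∀ m, p m ∈ Set.Icc (0 : ℝ) ξ)
    (ξs : ℕ → ℝ) (hbd : ∀ j, ξs j ∈ Set.Icc (0 : ℝ) 1) (hmono : Monotone ξs) :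
    ∑ j ∈ Finset.range (ℓ + 1),
        (∑ u ∈ (Finset.univ : Finset (Fin ℓ)).powersetCard j,
            (∏ m ∈ u, p m) * ∏ m ∈ uᶜ, (1 - p m)) * ((j : ℝ) / ℓ) * ξs j
      ≤ ∑ j ∈ Finset.range (ℓ + 1),
          ((ℓ.choose j : ℝ) * ξ ^ j * (1 - ξ) ^ (ℓ - j)) * ((j : ℝ) / ℓ) * ξs j := by
  set f : ℕ → ℝ := fun j => (j : ℝ) / ℓ * ξs j
  have hf : Monotone f :=
    Monotone.mul (fun i j hij => by gcongr) hmono (fun j => by positivity) fun j => (hbd j).1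
  have key := poissonBinomialExpect_le_of_le (s := univ) hξ.2 (fun m _ => hp m) hf
  rw [poissonBinomialExpect_eq_sum_range, poissonBinomialExpect_const, card_univ,
    Fintype.card_fin] at key
  simpa only [compl_eq_univ_sdiff, mul_assoc] using key
end
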